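/- arXiv:1701.02977 — 12 statements merged into one kernel-verified Lean document; each statement's English description precedes it below -/
import Mathlib

section
/- Let X be a Banach space and F ⊂ B_X a spear set, i.e. ‖F + 𝕋x‖ = 1 + ‖x‖ for every x ∈ X, where 𝕋 is the set of modulus-one scalars and ‖F + 𝕋x‖ = sup{‖z + ωx‖ : z ∈ F, ω ∈ 𝕋}. Then max(‖F + x‖, ‖F − x‖)² ≥ 1 + ‖x‖² for every x ∈ X. -/
open Metric

/-!
For `‖ω‖ = 1` put `c = ω‖x‖`. Then `z + ω • (‖x‖ • x) = ((1 + c)/2)(z + x) + ((1 - c)/2)(z - x)`,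
and the parallelogram law in `𝕜` gives `‖1 + c‖ + ‖1 - c‖ ≤ 2√(1 + ‖x‖²)`. Hence every element of
`F + 𝕋(‖x‖ • x)` has norm at most `√(1 + ‖x‖²) · max(‖F + x‖, ‖F - x‖)`, while the spear property
says that the supremum of these norms is `1 + ‖x‖²`.
-/

theorem RCLike.norm_one_add_add_norm_one_sub_le {𝕜 : Type*} [RCLike 𝕜] (c : 𝕜) :
    ‖1 + c‖ + ‖1 - c‖ ≤ 2 * √(1 + ‖c‖ ^ 2) := by
  have parallelogram := parallelogram_law_with_norm 𝕜 (1 : 𝕜) c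
  rw [norm_one] at parallelogram
  have hsqrt : √(1 + ‖c‖ ^ 2) ^ 2 = 1 + ‖c‖ ^ 2 := Real.sq_sqrt (by positivity)
  nlinarith [sq_nonneg (‖1 + c‖ - ‖1 - c‖), Real.sqrt_nonneg (1 + ‖c‖ ^ 2),
    sq_nonneg (‖1 + c‖ + ‖1 - c‖ - 2 * √(1 + ‖c‖ ^ 2))]

theorem norm_add_smul_le_sqrt_mul_max {𝕜 X : Type*} [RCLike 𝕜] [NormedAddCommGroup X]
    [NormedSpace 𝕜 X] (z x : X) (c : 𝕜) :
    ‖z + c • x‖ ≤ √(1 + ‖c‖ ^ 2) * max ‖z + x‖ ‖z - x‖ := by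
  have hdecomp : z + c • x = ((1 + c) / 2) • (z + x) + ((1 - c) / 2) • (z - x) := by module
  have hnorm_two : ‖(2 : 𝕜)‖ = 2 := RCLike.norm_two
  calc ‖z + c • x‖
      ≤ ‖(1 + c) / 2‖ * ‖z + x‖ + ‖(1 - c) / 2‖ * ‖z - x‖ := by
        rw [hdecomp, ← norm_smul, ← norm_smul]; exact norm_add_le _ _
    _ ≤ ‖(1 + c) / 2‖ * max ‖z + x‖ ‖z - x‖ + ‖(1 - c) / 2‖ * max ‖z + x‖ ‖z - x‖ := by
        gcongr
        exacts [le_max_left (‖z + x‖) ‖z - x‖, le_max_right (‖z + x‖) ‖z - x‖]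
    _ = (‖1 + c‖ + ‖1 - c‖) / 2 * max ‖z + x‖ ‖z - x‖ := by
        rw [norm_div, norm_div, hnorm_two]; ring
    _ ≤ √(1 + ‖c‖ ^ 2) * max ‖z + x‖ ‖z - x‖ := by
        gcongr
        linarith [RCLike.norm_one_add_add_norm_one_sub_le c]

theorem Real.bddAbove_of_sSup_pos {s : Set ℝ} (hs : 0 < sSup s) : BddAbove s := by
  by_contra hunbdd
  rw [Real.sSup_of_not_bddAbove hunbdd] at hs
  exact hs.false

section Spear

variable {𝕜 X : Type*} [RCLike 𝕜] [NormedAddCommGroup X] [NormedSpace 𝕜 X]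

variable (𝕜) in
def IsSpearSet (F : Set X) : Prop :=
  ∀ x : X, sSup {r : ℝ | ∃ z ∈ F, ∃ ω : 𝕜, ‖ω‖ = 1 ∧ r = ‖z + ω • x‖} = 1 + ‖x‖

namespace IsSpearSet

variable {F : Set X}

theorem norm_add_smul_le (hF : IsSpearSet 𝕜 F) {z : X} (hz : z ∈ F) {ω : 𝕜} (hω : ‖ω‖ = 1)
    (x : X) : ‖z + ω • x‖ ≤ 1 + ‖x‖ := by
  rw [← hF x]
  refine le_csSup (Real.bddAbove_of_sSup_pos ?_) ⟨z, hz, ω, hω, rfl⟩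
  rw [hF x]
  positivity

theorem nonempty (hF : IsSpearSet 𝕜 F) : F.Nonempty := by
  rw [Set.nonempty_iff_ne_empty]
  rintro rfl
  simpa using hF 0

theorem bddAbove_image_norm_add (hF : IsSpearSet 𝕜 F) (x : X) :
    BddAbove ((fun z => ‖z + x‖) '' F) :=
  ⟨1 + ‖x‖, Set.forall_mem_image.2 fun z hz => by
    simpa using hF.norm_add_smul_le hz (norm_one (α := 𝕜)) x⟩

theorem sqrt_one_add_sq_le (hF : IsSpearSet 𝕜 F) {x : X} {M : ℝ}
    (hM : ∀ z ∈ F, max ‖z + x‖ ‖z - x‖ ≤ M) : √(1 + ‖x‖ ^ 2) ≤ M := by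
  set y : X := ((‖x‖ : ℝ) : 𝕜) • x
  have hy : ‖y‖ = ‖x‖ ^ 2 := by rw [norm_smul, RCLike.norm_ofReal, abs_norm, sq]
  obtain ⟨z₀, hz₀⟩ := hF.nonempty
  have hbound : ∀ z ∈ F, ∀ ω : 𝕜, ‖ω‖ = 1 → ‖z + ω • y‖ ≤ √(1 + ‖x‖ ^ 2) * M := by
    intro z hz ω hω
    have hc : ‖ω * ((‖x‖ : ℝ) : 𝕜)‖ = ‖x‖ := by
      rw [norm_mul, hω, RCLike.norm_ofReal, abs_norm, one_mul]
    calc ‖z + ω • y‖ = ‖z + (ω * ((‖x‖ : ℝ) : 𝕜)) • x‖ := by rw [mul_smul]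
      _ ≤ √(1 + ‖x‖ ^ 2) * max ‖z + x‖ ‖z - x‖ := by
        simpa only [hc] using norm_add_smul_le_sqrt_mul_max z x (ω * ((‖x‖ : ℝ) : 𝕜))
      _ ≤ √(1 + ‖x‖ ^ 2) * M := by gcongr; exact hM z hz
  have hsup : √(1 + ‖x‖ ^ 2) * √(1 + ‖x‖ ^ 2) ≤ √(1 + ‖x‖ ^ 2) * M :=
    calc √(1 + ‖x‖ ^ 2) * √(1 + ‖x‖ ^ 2) = 1 + ‖y‖ := by
          rw [Real.mul_self_sqrt (by positivity), hy]
      _ = sSup {r : ℝ | ∃ z ∈ F, ∃ ω : 𝕜, ‖ω‖ = 1 ∧ r = ‖z + ω • y‖} := (hF y).symm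
      _ ≤ √(1 + ‖x‖ ^ 2) * M := csSup_le ⟨_, z₀, hz₀, 1, norm_one, rfl⟩
          fun r ⟨z, hz, ω, hω, hr⟩ => hr ▸ hbound z hz ω hω
  exact le_of_mul_le_mul_left hsup (Real.sqrt_pos.2 (by positivity))

end IsSpearSet

end Spear

theorem stmt1_general {𝕜 X : Type*} [RCLike 𝕜] [NormedAddCommGroup X] [NormedSpace 𝕜 X]
    (F : Set X)
    (h : ∀ x : X,
      sSup {r : ℝ | ∃ z ∈ F, ∃ ω : 𝕜, ‖ω‖ = 1 ∧ r = ‖z + ω • x‖} = 1 + ‖x‖)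
    (x : X) :
    1 + ‖x‖ ^ 2 ≤
      (max (sSup ((fun z => ‖z + x‖) '' F)) (sSup ((fun z => ‖z - x‖) '' F))) ^ 2 := by
  have hF : IsSpearSet 𝕜 F := h
  have hmax_le : ∀ z ∈ F, max ‖z + x‖ ‖z - x‖ ≤
      max (sSup ((fun z => ‖z + x‖) '' F)) (sSup ((fun z => ‖z - x‖) '' F)) := fun z hz => by
    refine max_le_max (le_csSup (hF.bddAbove_image_norm_add x) ⟨z, hz, rfl⟩) ?_
    simpa [sub_eq_add_neg] using le_csSup (hF.bddAbove_image_norm_add (-x)) ⟨z, hz, rfl⟩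
  exact (Real.sqrt_le_iff.1 (hF.sqrt_one_add_sq_le hmax_le)).2

/-- If `F ⊆ B_X` is a spear set, i.e. `‖F + 𝕋x‖ = 1 + ‖x‖` for every `x`,
then `max(‖F + x‖, ‖F − x‖)² ≥ 1 + ‖x‖²` for every `x ∈ X`. -/
theorem stmt1 {𝕜 X : Type*} [RCLike 𝕜] [NormedAddCommGroup X] [NormedSpace 𝕜 X]
    [CompleteSpace X] (F : Set X) (hF : F ⊆ closedBall (0 : X) 1)
    (h : ∀ x : X,
      sSup {r : ℝ | ∃ z ∈ F, ∃ ω : 𝕜, ‖ω‖ = 1 ∧ r = ‖z + ω • x‖} = 1 + ‖x‖)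
    (x : X) :
    1 + ‖x‖ ^ 2 ≤
      (max (sSup ((fun z => ‖z + x‖) '' F)) (sSup ((fun z => ‖z - x‖) '' F))) ^ 2 :=
  stmt1_general F h x
end

section
/- Every spear vector of a Banach space X is a strongly extreme point of the unit ball: if z ∈ S_X satisfies ‖z + 𝕋x‖ = 1 + ‖x‖ for all x ∈ X, and (y_n) is a sequence in X with ‖z + y_n‖ → 1 and ‖z − y_n‖ → 1, then y_n → 0. -/
open Filter

private lemma key_spear {𝕜 X : Type*} [RCLike 𝕜] [NormedAddCommGroup X] [NormedSpace 𝕜 X]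
    (z : X)
    (hspear : ∀ x : X, sSup {r : ℝ | ∃ ω : 𝕜, ‖ω‖ = 1 ∧ r = ‖z + ω • x‖} = 1 + ‖x‖)
    (x : X) {δ : ℝ} (hδ : 0 < δ) :
    ∃ ω : 𝕜, ‖ω‖ = 1 ∧ 1 + ‖x‖ - δ < ‖z + ω • x‖ := by
  have hne : {r : ℝ | ∃ ω : 𝕜, ‖ω‖ = 1 ∧ r = ‖z + ω • x‖}.Nonempty :=
    ⟨‖z + (1 : 𝕜) • x‖, 1, by simp⟩
  have hlt : 1 + ‖x‖ - δ < sSup {r : ℝ | ∃ ω : 𝕜, ‖ω‖ = 1 ∧ r = ‖z + ω • x‖} := by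
    rw [hspear x]; linarith
  obtain ⟨r, ⟨ω, hω, rfl⟩, hr⟩ := exists_lt_of_lt_csSup hne hlt
  exact ⟨ω, hω, hr⟩

private lemma key_spear_scaled {𝕜 X : Type*} [RCLike 𝕜] [NormedAddCommGroup X]
    [NormedSpace 𝕜 X] (z : X)
    (hspear : ∀ x : X, sSup {r : ℝ | ∃ ω : 𝕜, ‖ω‖ = 1 ∧ r = ‖z + ω • x‖} = 1 + ‖x‖)
    (x : X) {t δ : ℝ} (ht : 0 < t) (hδ : 0 < δ) :
    ∃ ω : 𝕜, ‖ω‖ = 1 ∧ t + ‖x‖ - δ < ‖(t : 𝕜) • z + ω • x‖ := by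
  have htk : (t : 𝕜) ≠ 0 := by
    simpa using ne_of_gt ht
  obtain ⟨ω, hω, h⟩ := key_spear z hspear ((t : 𝕜)⁻¹ • x) (div_pos hδ ht)
  refine ⟨ω, hω, ?_⟩
  have hnorm : ‖(t : 𝕜)⁻¹ • x‖ = ‖x‖ / t := by
    rw [norm_smul, norm_inv, RCLike.norm_ofReal, abs_of_pos ht, inv_mul_eq_div,
      div_eq_inv_mul, inv_mul_eq_div]
  rw [hnorm] at h
  have heq : (t : 𝕜) • (z + ω • ((t : 𝕜)⁻¹ • x)) = (t : 𝕜) • z + ω • x := by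
    rw [smul_add, smul_smul, smul_smul]
    congr 2
    field_simp
  have h2 : ‖(t : 𝕜) • z + ω • x‖ = t * ‖z + ω • ((t : 𝕜)⁻¹ • x)‖ := by
    rw [← heq, norm_smul, RCLike.norm_ofReal, abs_of_pos ht]
  rw [h2]
  have := (mul_lt_mul_iff_right₀ ht).mpr h
  calc t + ‖x‖ - δ = t * (1 + ‖x‖ / t - δ / t) := by field_simp
    _ < t * ‖z + ω • ((t : 𝕜)⁻¹ • x)‖ := this

/-- every spear vector is a strongly extreme point of the unit ball:
if `‖z + 𝕋x‖ = 1 + ‖x‖` for all `x`, and `‖z + yₙ‖ → 1` and `‖z − yₙ‖ → 1`,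
then `yₙ → 0`. -/
theorem stmt3 {𝕜 X : Type*} [RCLike 𝕜] [NormedAddCommGroup X] [NormedSpace 𝕜 X]
    [CompleteSpace X] (z : X) (hz : ‖z‖ = 1)
    (hspear : ∀ x : X, sSup {r : ℝ | ∃ ω : 𝕜, ‖ω‖ = 1 ∧ r = ‖z + ω • x‖} = 1 + ‖x‖)
    (y : ℕ → X)
    (h1 : Tendsto (fun n => ‖z + y n‖) atTop (nhds 1))
    (h2 : Tendsto (fun n => ‖z - y n‖) atTop (nhds 1)) :
    Tendsto y atTop (nhds 0) := by
  refine NormedAddCommGroup.tendsto_nhds_zero.mpr fun ε hε => ?_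
  -- choose a large parameter t and small margin η
  set t : ℝ := 2 / ε with ht_def
  have ht : 0 < t := by positivity
  set s : ℝ := Real.sqrt (t ^ 2 + 1) with hs_def
  have hs0 : 0 < s := Real.sqrt_pos.mpr (by positivity)
  have hssq : s ^ 2 = t ^ 2 + 1 := Real.sq_sqrt (by positivity)
  have htε : t * ε = 2 := by rw [ht_def]; field_simp
  have hst : s ≤ t + ε / 4 := by
    have h' : t ^ 2 + 1 ≤ (t + ε / 4) ^ 2 := by nlinarith
    calc s ≤ Real.sqrt ((t + ε / 4) ^ 2) := Real.sqrt_le_sqrt h'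
      _ = t + ε / 4 := Real.sqrt_sq (by positivity)
  set η : ℝ := ε / (4 * s) with hη_def
  have hη : 0 < η := by positivity
  have e1 : ∀ᶠ n in atTop, ‖z + y n‖ < 1 + η := by
    simpa using h1.eventually (eventually_lt_nhds (by linarith : (1:ℝ) < 1 + η))
  have e2 : ∀ᶠ n in atTop, ‖z - y n‖ < 1 + η := by
    simpa using h2.eventually (eventually_lt_nhds (by linarith : (1:ℝ) < 1 + η))
  filter_upwards [e1, e2] with n hn1 hn2
  -- get a near-optimal ω for t•z + ω•(y n)
  obtain ⟨ω, hω, hlow⟩ := key_spear_scaled z hspear (y n) ht (by positivity : (0:ℝ) < ε / 4)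
  -- decompose t•z + ω•(y n) as a combination of z + y n and z - y n
  have hdecomp : (t : 𝕜) • z + ω • (y n) =
      (((t : 𝕜) + ω) / 2) • (z + y n) + (((t : 𝕜) - ω) / 2) • (z - y n) := by
    rw [smul_add, smul_sub]
    module
  -- parallelogram law in 𝕜
  have hpar : ‖(t : 𝕜) + ω‖ ^ 2 + ‖(t : 𝕜) - ω‖ ^ 2 = 2 * (t ^ 2 + 1) := by
    have := parallelogram_law_with_norm 𝕜 (t : 𝕜) ω
    rw [RCLike.norm_ofReal, abs_of_pos ht, hω] at this
    ring_nf at this ⊢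
    linarith [this]
  have hab : ‖(t : 𝕜) + ω‖ + ‖(t : 𝕜) - ω‖ ≤ 2 * s := by
    nlinarith [sq_nonneg (‖(t : 𝕜) + ω‖ - ‖(t : 𝕜) - ω‖), norm_nonneg ((t : 𝕜) + ω),
      norm_nonneg ((t : 𝕜) - ω), hs0]
  -- upper bound on the norm
  have hub : ‖(t : 𝕜) • z + ω • (y n)‖ ≤ s * (1 + η) := by
    rw [hdecomp]
    calc ‖(((t : 𝕜) + ω) / 2) • (z + y n) + (((t : 𝕜) - ω) / 2) • (z - y n)‖
        ≤ ‖(((t : 𝕜) + ω) / 2) • (z + y n)‖ + ‖(((t : 𝕜) - ω) / 2) • (z - y n)‖ :=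
          norm_add_le _ _
      _ = ‖(t : 𝕜) + ω‖ / 2 * ‖z + y n‖ + ‖(t : 𝕜) - ω‖ / 2 * ‖z - y n‖ := by
          rw [norm_smul, norm_smul, norm_div, norm_div]
          norm_num
      _ ≤ ‖(t : 𝕜) + ω‖ / 2 * (1 + η) + ‖(t : 𝕜) - ω‖ / 2 * (1 + η) :=
          add_le_add (mul_le_mul_of_nonneg_left hn1.le (by positivity))
            (mul_le_mul_of_nonneg_left hn2.le (by positivity))
      _ = (‖(t : 𝕜) + ω‖ + ‖(t : 𝕜) - ω‖) / 2 * (1 + η) := by ring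
      _ ≤ 2 * s / 2 * (1 + η) := by gcongr
      _ = s * (1 + η) := by ring
  -- combine
  have hsη : s * η = ε / 4 := by
    rw [hη_def]; field_simp
  have : t + ‖y n‖ - ε / 4 < s + ε / 4 := by
    calc t + ‖y n‖ - ε / 4 < ‖(t : 𝕜) • z + ω • (y n)‖ := hlow
      _ ≤ s * (1 + η) := hub
      _ = s + ε / 4 := by rw [mul_add, mul_one, hsη]
  have : ‖y n‖ < s - t + ε / 2 := by linarith
  have hε2 : s - t ≤ ε / 4 := by linarith
  linarith
end

section
/- If X is a strictly convex Banach space of dimension at least 2, then X has no spear vectors. -/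
open Metric

/-- A spear vector: `z ∈ S_X` with `‖z + 𝕋x‖ = 1 + ‖x‖` for every `x ∈ X`. -/
def IsSpear (𝕜 : Type*) {X : Type*} [RCLike 𝕜] [NormedAddCommGroup X]
    [NormedSpace 𝕜 X] (z : X) : Prop :=
  ‖z‖ = 1 ∧ ∀ x : X, sSup {r : ℝ | ∃ ω : 𝕜, ‖ω‖ = 1 ∧ r = ‖z + ω • x‖} = 1 + ‖x‖

/-- a strictly convex Banach space of dimension at least 2 (every point of
the unit sphere is an extreme point of the unit ball) has no spear vectors. -/
theorem stmt6 {𝕜 X : Type*} [RCLike 𝕜] [NormedAddCommGroup X] [NormedSpace 𝕜 X]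
    [NormedSpace ℝ X] [IsScalarTower ℝ 𝕜 X] [CompleteSpace X]
    (hsc : ∀ z : X, ‖z‖ = 1 → z ∈ Set.extremePoints ℝ (closedBall (0 : X) 1))
    (hdim : 2 ≤ Module.rank 𝕜 X) :
    ∀ z : X, ¬ IsSpear 𝕜 z := by
  rintro z ⟨hz, hsup⟩
  -- Key step: every unit vector is a unimodular multiple of z.
  have key : ∀ x : X, ‖x‖ = 1 → ∃ ω : 𝕜, ω ≠ 0 ∧ z = ω • x := by
    intro x hx
    -- the set of norms is a compact image, so the sup is attained
    set S : Set ℝ := {r : ℝ | ∃ ω : 𝕜, ‖ω‖ = 1 ∧ r = ‖z + ω • x‖}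
    have hSeq : S = (fun ω : 𝕜 => ‖z + ω • x‖) '' sphere (0 : 𝕜) 1 := by
      ext r
      simp only [Set.mem_image, mem_sphere, dist_zero_right, S, Set.mem_setOf_eq]
      constructor
      · rintro ⟨ω, h1, rfl⟩; exact ⟨ω, h1, rfl⟩
      · rintro ⟨ω, h1, rfl⟩; exact ⟨ω, h1, rfl⟩
    have hScomp : IsCompact S := by
      rw [hSeq]
      exact (isCompact_sphere _ _).image (by fun_prop)
    have hSne : S.Nonempty := ⟨‖z + (1 : 𝕜) • x‖, 1, by simp, rfl⟩
    obtain ⟨rmem⟩ : ∃ _ : sSup S ∈ S, True := ⟨hScomp.sSup_mem hSne, trivial⟩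
    obtain ⟨ω, hω, hωeq⟩ := rmem
    have h2 : ‖z + ω • x‖ = 2 := by
      rw [← hωeq, hsup x, hx]; norm_num
    have hωx : ‖ω • x‖ = 1 := by rw [norm_smul, hω, hx, one_mul]
    -- strict convexity: the midpoint has norm 1, hence is extreme
    set m : X := (2⁻¹ : ℝ) • (z + ω • x) with hm
    have hmn : ‖m‖ = 1 := by
      rw [hm, norm_smul, h2]; norm_num
    obtain ⟨-, hext⟩ := mem_extremePoints.mp (hsc m hmn)
    have hzball : z ∈ closedBall (0 : X) 1 := by
      simp [mem_closedBall, dist_zero_right, hz]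
    have hxball : ω • x ∈ closedBall (0 : X) 1 := by
      simp [mem_closedBall, dist_zero_right, hωx]
    have hseg : m ∈ openSegment ℝ z (ω • x) := by
      refine ⟨2⁻¹, 2⁻¹, by norm_num, by norm_num, by norm_num, ?_⟩
      rw [hm]; module
    obtain ⟨h1, h2'⟩ := hext _ hzball _ hxball hseg
    refine ⟨ω, ?_, by rw [h1, ← h2']⟩
    intro h0
    rw [h0] at hω
    simp at hω
  -- hence the space has rank at most 1, contradiction
  have hle : Module.rank 𝕜 X ≤ 1 := by
    rw [rank_le_one_iff]
    refine ⟨z, fun v => ?_⟩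
    rcases eq_or_ne v 0 with rfl | hv
    · exact ⟨0, by simp⟩
    · have hvn : ‖v‖ ≠ 0 := norm_ne_zero_iff.mpr hv
      have hx : ‖(‖v‖⁻¹ : ℝ) • v‖ = 1 := by
        rw [norm_smul, norm_inv, norm_norm, inv_mul_cancel₀ hvn]
      obtain ⟨ω, hω0, hωz⟩ := key _ hx
      refine ⟨(‖v‖ : 𝕜) * ω⁻¹, ?_⟩
      rw [hωz, smul_smul, mul_assoc, inv_mul_cancel₀ hω0, mul_one,
        ← RCLike.real_smul_eq_coe_smul (K := 𝕜), smul_inv_smul₀ hvn]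
  have h21 : (2 : Cardinal) ≤ 1 := hdim.trans hle
  norm_num at h21
end

section
/- If X is a smooth Banach space of dimension at least 2, then X has no spear vectors. -/
theorem LinearMap.exists_ne_zero_apply_eq_zero_of_two_le_rank {K V : Type*} [DivisionRing K]
    [AddCommGroup V] [Module K V] (f : V →ₗ[K] K) (h : 2 ≤ Module.rank K V) :
    ∃ x, x ≠ 0 ∧ f x = 0 := by
  by_contra! hf
  have hinj : Function.Injective f :=
    (injective_iff_map_eq_zero f).2 fun x => not_imp_not.1 (hf x)
  have := (Cardinal.lift_le.2 h).trans (f.lift_rank_le_of_injective hinj)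
  simp at this

section

variable {𝕜 X : Type*} [RCLike 𝕜] [NormedAddCommGroup X] [NormedSpace 𝕜 X]

theorem exists_norm_add_smul_eq_sSup (z x : X) :
    ∃ ω : 𝕜, ‖ω‖ = 1 ∧
      ‖z + ω • x‖ = sSup {r : ℝ | ∃ ω : 𝕜, ‖ω‖ = 1 ∧ r = ‖z + ω • x‖} := by
  have hset : {r : ℝ | ∃ ω : 𝕜, ‖ω‖ = 1 ∧ r = ‖z + ω • x‖}
      = (fun ω : 𝕜 => ‖z + ω • x‖) '' Metric.sphere 0 1 := by
    ext r
    simp [eq_comm]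
  rw [hset]
  have hcompact : IsCompact ((fun ω : 𝕜 => ‖z + ω • x‖) '' Metric.sphere 0 1) :=
    (isCompact_sphere 0 1).image (by fun_prop)
  obtain ⟨ω, hω, hmax⟩ := hcompact.sSup_mem (Set.image_nonempty.2 ⟨1, by simp⟩)
  exact ⟨ω, mem_sphere_zero_iff_norm.1 hω, hmax⟩

theorem StrongDual.apply_eq_norm_of_apply_add_eq {ψ : StrongDual 𝕜 X} (hψ : ‖ψ‖ ≤ 1)
    {u v : X} (h : ψ (u + v) = ((‖u‖ + ‖v‖ : ℝ) : 𝕜)) :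
    ψ u = ‖u‖ ∧ ψ v = ‖v‖ := by
  have hle (w : X) : RCLike.re (ψ w) ≤ ‖ψ w‖ ∧ ‖ψ w‖ ≤ ‖w‖ :=
    ⟨RCLike.re_le_norm _, (ψ.le_opNorm w).trans (mul_le_of_le_one_left (norm_nonneg w) hψ)⟩
  have hre : RCLike.re (ψ u) + RCLike.re (ψ v) = ‖u‖ + ‖v‖ := by
    simpa using congrArg RCLike.re h
  have key (w : X) (hw : ‖w‖ ≤ RCLike.re (ψ w)) : ψ w = ‖w‖ := by
    have hn : ‖ψ w‖ = ‖w‖ := le_antisymm (hle w).2 (hw.trans (hle w).1)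
    rw [← hn]
    exact RCLike.norm_le_re_iff_eq_norm.1 (hn ▸ hw)
  obtain ⟨hu1, hu2⟩ := hle u
  obtain ⟨hv1, hv2⟩ := hle v
  exact ⟨key u (by linarith), key v (by linarith)⟩

end

theorem stmt7_general {𝕜 X : Type*} [RCLike 𝕜] [NormedAddCommGroup X] [NormedSpace 𝕜 X]
    (hsmooth : ∀ x : X, x ≠ 0 →
      ∃! φ : StrongDual 𝕜 X, ‖φ‖ = 1 ∧ φ x = (‖x‖ : 𝕜))
    (hdim : 2 ≤ Module.rank 𝕜 X) :
    ∀ z : X, ¬ IsSpear 𝕜 z := by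
  rintro z ⟨hz, hsup⟩
  obtain ⟨φ, -, hφ_unique⟩ := hsmooth z (norm_ne_zero_iff.1 (by simp [hz]))
  obtain ⟨x, hx, hφx : φ x = 0⟩ := φ.toLinearMap.exists_ne_zero_apply_eq_zero_of_two_le_rank hdim
  obtain ⟨ω, hω, hmax⟩ := exists_norm_add_smul_eq_sSup (𝕜 := 𝕜) z x
  rw [hsup x] at hmax
  obtain ⟨ψ, hψ, hψ_apply⟩ := exists_dual_vector 𝕜 (z + ω • x) (by rw [hmax]; positivity)
  rw [hmax, ← hz, ← one_mul ‖x‖, ← hω, ← norm_smul] at hψ_apply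
  obtain ⟨hψz, hψx⟩ := ψ.apply_eq_norm_of_apply_add_eq hψ.le hψ_apply
  rw [hφ_unique ψ ⟨hψ, hψz⟩, map_smul, hφx, smul_zero, eq_comm, RCLike.ofReal_eq_zero,
    norm_smul, hω, one_mul] at hψx
  exact hx (norm_eq_zero.1 hψx)

/-- a smooth Banach space of dimension at least 2 (for each nonzero `x`
there is a unique norm-one functional `x*` with `x*(x) = ‖x‖`) has no spear vectors. -/
theorem stmt7 {𝕜 X : Type*} [RCLike 𝕜] [NormedAddCommGroup X] [NormedSpace 𝕜 X]
    [CompleteSpace X]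
    (hsmooth : ∀ x : X, x ≠ 0 →
      ∃! φ : StrongDual 𝕜 X, ‖φ‖ = 1 ∧ φ x = (‖x‖ : 𝕜))
    (hdim : 2 ≤ Module.rank 𝕜 X) :
    ∀ z : X, ¬ IsSpear 𝕜 z :=
  stmt7_general hsmooth hdim
end

section
/- Let X be a real Banach space, z* a spear vector of X*, and x* ∈ X* a norm-attaining functional with ‖z* − x*‖ < 1 + ‖x*‖. Then z* + x* is norm-attaining and ‖z* + x*‖ = 1 + ‖x*‖. -/
open Set Filter Topology Pointwise

namespace Stmt8Aux

variable {X : Type*} [NormedAddCommGroup X] [NormedSpace ℝ X]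

/-- Linear-like bounded functions on the dual taking value 1 at `z`. -/
def Fset (z : StrongDual ℝ X) : Set ((StrongDual ℝ X) → ℝ) :=
  {g | g z = 1 ∧ (∀ w, |g w| ≤ ‖w‖) ∧
    ∀ (p q : ℝ) (w₁ w₂ : StrongDual ℝ X),
      g (p • w₁ + q • w₂) = p * g w₁ + q * g w₂}

lemma Fset_sum {z : StrongDual ℝ X} {g : (StrongDual ℝ X) → ℝ}
    (hg : g ∈ Fset z) {ι : Type*} (s : Finset ι) (c : ι → ℝ)
    (v : ι → StrongDual ℝ X) :
    g (∑ i ∈ s, c i • v i) = ∑ i ∈ s, c i * g (v i) := by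
  obtain ⟨-, -, hlin⟩ := hg
  have h0 : g 0 = 0 := by
    have := hlin 0 0 0 0; simpa using this
  have hadd : ∀ w₁ w₂, g (w₁ + w₂) = g w₁ + g w₂ := by
    intro w₁ w₂; have := hlin 1 1 w₁ w₂; simpa using this
  have hsmul : ∀ (p : ℝ) w, g (p • w) = p * g w := by
    intro p w; have := hlin p 0 w 0; simpa [h0] using this
  classical
  induction s using Finset.induction with
  | empty => simpa using h0
  | insert _ _ hx ih => rw [Finset.sum_insert hx, Finset.sum_insert hx, hadd, hsmul, ih]

lemma convex_Fset (z : StrongDual ℝ X) : Convex ℝ (Fset z) := by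
  intro g hg h hh a b ha hb hab
  refine ⟨?_, ?_, ?_⟩
  · simp only [Pi.add_apply, Pi.smul_apply, smul_eq_mul, hg.1, hh.1]
    linarith
  · intro w
    have h1 := hg.2.1 w
    have h2 := hh.2.1 w
    simp only [Pi.add_apply, Pi.smul_apply, smul_eq_mul]
    calc |a * g w + b * h w| ≤ |a * g w| + |b * h w| := abs_add_le _ _
      _ = a * |g w| + b * |h w| := by
          rw [abs_mul, abs_mul, abs_of_nonneg ha, abs_of_nonneg hb]
      _ ≤ a * ‖w‖ + b * ‖w‖ := by gcongr
      _ = ‖w‖ := by rw [← add_mul, hab, one_mul]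
  · intro p q w₁ w₂
    simp only [Pi.add_apply, Pi.smul_apply, smul_eq_mul, hg.2.2 p q w₁ w₂, hh.2.2 p q w₁ w₂]
    ring

lemma isClosed_Fset (z : StrongDual ℝ X) : IsClosed (Fset z) := by
  have h1 : IsClosed {g : (StrongDual ℝ X) → ℝ | g z = 1} :=
    isClosed_eq (continuous_apply z) continuous_const
  have h2 : IsClosed {g : (StrongDual ℝ X) → ℝ | ∀ w, |g w| ≤ ‖w‖} := by
    have : {g : (StrongDual ℝ X) → ℝ | ∀ w, |g w| ≤ ‖w‖} =
        ⋂ w, {g : (StrongDual ℝ X) → ℝ | |g w| ≤ ‖w‖} := by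
      ext g; simp [Set.mem_iInter]
    rw [this]
    exact isClosed_iInter fun w =>
      isClosed_le ((continuous_apply w).abs) continuous_const
  have h3 : IsClosed {g : (StrongDual ℝ X) → ℝ |
      ∀ (p q : ℝ) (w₁ w₂ : StrongDual ℝ X),
        g (p • w₁ + q • w₂) = p * g w₁ + q * g w₂} := by
    have heq : {g : (StrongDual ℝ X) → ℝ |
        ∀ (p q : ℝ) (w₁ w₂ : StrongDual ℝ X),
          g (p • w₁ + q • w₂) = p * g w₁ + q * g w₂} =
        ⋂ (p : ℝ), ⋂ (q : ℝ), ⋂ (w₁ : StrongDual ℝ X), ⋂ (w₂ : StrongDual ℝ X),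
          {g : (StrongDual ℝ X) → ℝ | g (p • w₁ + q • w₂) = p * g w₁ + q * g w₂} := by
      ext g; simp [Set.mem_iInter]
    rw [heq]
    exact isClosed_iInter fun p => isClosed_iInter fun q => isClosed_iInter fun w₁ =>
      isClosed_iInter fun w₂ => isClosed_eq (continuous_apply _)
        (((continuous_const.mul (continuous_apply w₁))).add
          ((continuous_const.mul (continuous_apply w₂))))
  exact h1.inter (h2.inter h3)

lemma isCompact_Fset (z : StrongDual ℝ X) : IsCompact (Fset z) :=
  IsCompact.of_isClosed_subset
    (isCompact_univ_pi fun w : StrongDual ℝ X => isCompact_Icc)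
    (isClosed_Fset z) (fun g hg w _ => abs_le.1 (hg.2.1 w))

lemma exists_witness (z : StrongDual ℝ X) (hz : ‖z‖ = 1)
    (hspear : ∀ y : StrongDual ℝ X, max ‖z + y‖ ‖z - y‖ = 1 + ‖y‖)
    (y : StrongDual ℝ X) :
    ∃ g ∈ Fset z, g y = ‖y‖ ∨ g y = -‖y‖ := by
  obtain ⟨ε, hεor, hεn⟩ :
      ∃ ε : ℝ, (ε = 1 ∨ ε = -1) ∧ ‖z + ε • y‖ = 1 + ‖y‖ := by
    have hs := hspear y
    rcases max_choice ‖z + y‖ ‖z - y‖ with h | h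
    · rw [h] at hs
      exact ⟨1, Or.inl rfl, by rwa [one_smul]⟩
    · rw [h] at hs
      exact ⟨-1, Or.inr rfl, by convert hs using 2; module⟩
  have haux : ∀ n : ℕ, ∃ a : X, ‖a‖ ≤ 1 ∧
      1 + ‖y‖ - 1 / (n + 1) < (z + ε • y) a := by
    intro n
    have hpos : (0 : ℝ) < 1 / (n + 1) := by positivity
    have hlt : 1 + ‖y‖ - 1 / (n + 1) < ‖z + ε • y‖ := by rw [hεn]; linarith
    obtain ⟨a, ha1, ha2⟩ := ContinuousLinearMap.exists_lt_apply_of_lt_opNorm (z + ε • y) hlt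
    rcases le_or_gt 0 ((z + ε • y) a) with hp | hn
    · exact ⟨a, ha1.le, by rwa [Real.norm_eq_abs, abs_of_nonneg hp] at ha2⟩
    · refine ⟨-a, by simpa using ha1.le, ?_⟩
      rw [map_neg]
      rwa [Real.norm_eq_abs, abs_of_neg hn] at ha2
  choose a ha1 ha2 using haux
  set u : ℕ → ((StrongDual ℝ X) → ℝ) := fun n w => w (a n) with hu
  set box := Set.pi Set.univ (fun w : StrongDual ℝ X => Icc (-‖w‖) ‖w‖) with hbox
  have hmem : ∀ n, u n ∈ box := by
    intro n w _
    have h1 : ‖w (a n)‖ ≤ ‖w‖ * ‖a n‖ := w.le_opNorm (a n)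
    have h2 : ‖w‖ * ‖a n‖ ≤ ‖w‖ * 1 :=
      mul_le_mul_of_nonneg_left (ha1 n) (norm_nonneg w)
    rw [Real.norm_eq_abs] at h1
    have : |w (a n)| ≤ ‖w‖ := by linarith
    exact abs_le.1 this
  have hle : Filter.map u atTop ≤ 𝓟 box :=
    Filter.le_principal_iff.mpr (Filter.mem_map.mpr (Filter.univ_mem' hmem))
  obtain ⟨g, hgbox, hcl⟩ :=
    (isCompact_univ_pi fun w : StrongDual ℝ X => isCompact_Icc).exists_mapClusterPt
      (f := atTop) (u := u) hle
  have hclosed_mem : ∀ (C : Set ((StrongDual ℝ X) → ℝ)), IsClosed C →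
      (∀ᶠ n in atTop, u n ∈ C) → g ∈ C := by
    intro C hC hev
    have h1 : ClusterPt g (𝓟 C) :=
      hcl.clusterPt.mono (Filter.le_principal_iff.mpr (Filter.mem_map.mpr hev))
    exact hC.closure_eq ▸ mem_closure_iff_clusterPt.mpr h1
  have hbound : ∀ w, |g w| ≤ ‖w‖ := fun w => abs_le.2 (hgbox w (Set.mem_univ w))
  have hlin : ∀ (p q : ℝ) (w₁ w₂ : StrongDual ℝ X),
      g (p • w₁ + q • w₂) = p * g w₁ + q * g w₂ := by
    have := hclosed_mem {g | ∀ (p q : ℝ) (w₁ w₂ : StrongDual ℝ X),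
        g (p • w₁ + q • w₂) = p * g w₁ + q * g w₂} ?_ ?_
    · exact this
    · have heq : {g : (StrongDual ℝ X) → ℝ | ∀ (p q : ℝ) (w₁ w₂ : StrongDual ℝ X),
          g (p • w₁ + q • w₂) = p * g w₁ + q * g w₂} =
          ⋂ (p : ℝ), ⋂ (q : ℝ), ⋂ (w₁ : StrongDual ℝ X), ⋂ (w₂ : StrongDual ℝ X),
            {g : (StrongDual ℝ X) → ℝ | g (p • w₁ + q • w₂) = p * g w₁ + q * g w₂} := by
        ext g; simp [Set.mem_iInter]
      rw [heq]
      exact isClosed_iInter fun p => isClosed_iInter fun q => isClosed_iInter fun w₁ =>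
        isClosed_iInter fun w₂ => isClosed_eq (continuous_apply _)
          (((continuous_const.mul (continuous_apply w₁))).add
            ((continuous_const.mul (continuous_apply w₂))))
    · filter_upwards with n p q w₁ w₂
      simp [hu, ContinuousLinearMap.add_apply, ContinuousLinearMap.smul_apply, smul_eq_mul]
  have hgey : ∀ m : ℕ, 1 + ‖y‖ - 1 / (m + 1) ≤ g z + ε * g y := by
    intro m
    refine hclosed_mem {g | 1 + ‖y‖ - 1 / (m + 1) ≤ g z + ε * g y} ?_ ?_
    · exact isClosed_le continuous_const
        ((continuous_apply z).add (continuous_const.mul (continuous_apply y)))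
    · filter_upwards [Filter.eventually_ge_atTop m] with n hn
      have hmono : (1 : ℝ) / (n + 1) ≤ 1 / (m + 1) := by
        apply one_div_le_one_div_of_le
        · positivity
        · have : (m : ℝ) ≤ n := Nat.cast_le.2 hn
          linarith
      have h2 := ha2 n
      have h3 : (z + ε • y) (a n) = u n z + ε * u n y := by
        show (z + ε • y) (a n) = z (a n) + ε * y (a n)
        simp [ContinuousLinearMap.add_apply, ContinuousLinearMap.smul_apply, smul_eq_mul]
      show 1 + ‖y‖ - 1 / (m + 1) ≤ u n z + ε * u n y
      rw [← h3]
      linarith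
  have hge : 1 + ‖y‖ ≤ g z + ε * g y := by
    by_contra hlt
    push_neg at hlt
    obtain ⟨m, hm⟩ := exists_nat_one_div_lt (show (0:ℝ) < 1 + ‖y‖ - (g z + ε * g y) by linarith)
    have := hgey m
    linarith
  have habsε : |ε| = 1 := by rcases hεor with rfl | rfl <;> norm_num
  have hgz_le : g z ≤ 1 := by
    have := hbound z; rw [hz] at this; exact (abs_le.1 this).2
  have hεgy_le : ε * g y ≤ ‖y‖ := by
    have h1 : |ε * g y| = |g y| := by rw [abs_mul, habsε, one_mul]
    have := hbound y
    calc ε * g y ≤ |ε * g y| := le_abs_self _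
      _ = |g y| := h1
      _ ≤ ‖y‖ := this
  have hgz : g z = 1 := by linarith
  have hεgy : ε * g y = ‖y‖ := by linarith
  refine ⟨g, ⟨hgz, hbound, hlin⟩, ?_⟩
  rcases hεor with rfl | rfl
  · left; linarith
  · right; linarith

end Stmt8Aux

open Stmt8Aux

/-- Let `X` be a real Banach space, `z*` a spear vector of `X*`, and
`x* ∈ X*` norm-attaining with `‖z* − x*‖ < 1 + ‖x*‖`. Then `z* + x*` is norm-attaining
and `‖z* + x*‖ = 1 + ‖x*‖`. -/
theorem stmt8 {X : Type*} [NormedAddCommGroup X] [NormedSpace ℝ X] [CompleteSpace X]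
    (z : StrongDual ℝ X) (hz : ‖z‖ = 1)
    (hspear : ∀ y : StrongDual ℝ X, max ‖z + y‖ ‖z - y‖ = 1 + ‖y‖)
    (x : StrongDual ℝ X) (hna : ∃ u : X, ‖u‖ = 1 ∧ x u = ‖x‖)
    (hclose : ‖z - x‖ < 1 + ‖x‖) :
    (∃ u : X, ‖u‖ = 1 ∧ (z + x) u = ‖z + x‖) ∧ ‖z + x‖ = 1 + ‖x‖ := by
  classical
  obtain ⟨u, hu1, hux⟩ := hna
  have hzx : ‖z + x‖ = 1 + ‖x‖ := by
    have hs := hspear x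
    rcases max_choice ‖z + x‖ ‖z - x‖ with h | h
    · rw [h] at hs; exact hs
    · rw [h] at hs; exact absurd hs (ne_of_lt hclose)
  set F := Fset z with hF
  obtain ⟨g₀, hg₀, -⟩ := exists_witness z hz hspear 0
  have hFne : F.Nonempty := ⟨g₀, hg₀⟩
  have hnFne : (-F).Nonempty := ⟨-g₀, by simpa [Set.mem_neg] using hg₀⟩
  set K := convexJoin ℝ F (-F) with hK
  have hKconv : Convex ℝ K := (convex_Fset z).convexJoin ((convex_Fset z).neg)
  have hFc : IsCompact F := isCompact_Fset z
  have hnFc : IsCompact (-F) := by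
    rw [← Set.image_neg_eq_neg]
    exact hFc.image continuous_neg
  have hKcomp : IsCompact K := by
    have hKeq : K = (fun p : ℝ × (((StrongDual ℝ X) → ℝ) × ((StrongDual ℝ X) → ℝ)) =>
        p.1 • p.2.1 + (1 - p.1) • p.2.2) '' (Icc (0:ℝ) 1 ×ˢ (F ×ˢ (-F))) := by
      ext p
      constructor
      · intro hp
        rw [hK, mem_convexJoin] at hp
        obtain ⟨a, ha, b, hb, t₁, t₂, ht₁, ht₂, hsum, heq⟩ := hp
        refine ⟨(t₁, a, b), ⟨⟨ht₁, by linarith⟩, ha, hb⟩, ?_⟩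
        have ht : (1 : ℝ) - t₁ = t₂ := by linarith
        simpa [ht] using heq
      · rintro ⟨⟨t, a, b⟩, ⟨⟨ht0, ht1⟩, ha, hb⟩, rfl⟩
        rw [hK, mem_convexJoin]
        exact ⟨a, ha, b, hb, t, 1 - t, ht0, by linarith, by ring, rfl⟩
    rw [hKeq]
    refine (isCompact_Icc.prod (hFc.prod hnFc)).image ?_
    exact (continuous_fst.smul (continuous_fst.comp continuous_snd)).add
      ((continuous_const.sub continuous_fst).smul (continuous_snd.comp continuous_snd))
  set eu : (StrongDual ℝ X) → ℝ := fun w => w u with heu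
  have hmemK : eu ∈ K := by
    by_contra hnot
    obtain ⟨I, U, hIU, hsub⟩ := isOpen_pi_iff.1 hKcomp.isClosed.isOpen_compl eu hnot
    set π : ((StrongDual ℝ X) → ℝ) → (I → ℝ) := fun g i => g i with hπ
    have hπcont : Continuous π := continuous_pi fun i => continuous_apply _
    have hπlin : IsLinearMap ℝ π := ⟨fun a b => rfl, fun c a => rfl⟩
    set C := π '' K with hC
    have hCconv : Convex ℝ C := hKconv.is_linear_image hπlin
    have hCcl : IsClosed C := (hKcomp.image hπcont).isClosed
    have hpC : π eu ∉ C := by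
      rintro ⟨k, hkK, hk⟩
      have hkpi : k ∈ (I : Set (StrongDual ℝ X)).pi U := by
        intro w hw
        have h1 : k w = eu w := congrFun hk ⟨w, hw⟩
        rw [h1]
        exact (hIU w hw).2
      exact (hsub hkpi) hkK
    obtain ⟨f, b, hfb, hbp⟩ := geometric_hahn_banach_closed_point hCconv hCcl hpC
    set c : I → ℝ := fun i => f (fun j => if i = j then (1:ℝ) else 0) with hc
    have hfq : ∀ q : I → ℝ, f q = ∑ i, q i * c i := by
      intro q
      conv_lhs => rw [pi_eq_sum_univ q]
      rw [map_sum]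
      exact Finset.sum_congr rfl fun i _ => by rw [map_smul, smul_eq_mul]
    set y : StrongDual ℝ X := ∑ i : I, c i • (i : StrongDual ℝ X) with hy
    have hyu : y u = ∑ i : I, c i * (i : StrongDual ℝ X) u := by
      rw [hy]
      simp [ContinuousLinearMap.sum_apply, ContinuousLinearMap.smul_apply, smul_eq_mul]
    have hfeu : f (π eu) = y u := by
      rw [hfq (π eu), hyu]
      exact Finset.sum_congr rfl fun i _ => by rw [mul_comm]
    have hyule : y u ≤ ‖y‖ := by
      calc y u ≤ |y u| := le_abs_self _
        _ = ‖y u‖ := (Real.norm_eq_abs _).symm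
        _ ≤ ‖y‖ * ‖u‖ := y.le_opNorm u
        _ = ‖y‖ := by rw [hu1, mul_one]
    obtain ⟨g, hgF, hgy⟩ := exists_witness z hz hspear y
    have hgsum : g y = ∑ i : I, c i * g (i : StrongDual ℝ X) := by
      rw [hy]
      exact Fset_sum hgF Finset.univ c (fun i => (i : StrongDual ℝ X))
    have hfK : ∀ m ∈ K, f (π m) < b := fun m hm => hfb _ ⟨m, hm, rfl⟩
    rcases hgy with hpos | hneg
    · have hgK : g ∈ K := subset_convexJoin_left hnFne hgF
      have hfg : f (π g) = g y := by
        rw [hfq (π g), hgsum]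
        exact Finset.sum_congr rfl fun i _ => by rw [mul_comm]
      have h2 := hfK g hgK
      rw [hfg, hpos] at h2
      rw [hfeu] at hbp
      linarith
    · have hgK : -g ∈ K := subset_convexJoin_right hFne (by simpa [Set.mem_neg] using hgF)
      have hfg : f (π (-g)) = -g y := by
        have hπneg : π (-g) = -(π g) := rfl
        rw [hπneg, map_neg, hfq (π g), hgsum, neg_inj]
        exact Finset.sum_congr rfl fun i _ => by rw [mul_comm]
      have h2 := hfK (-g) hgK
      rw [hfg, hneg, neg_neg] at h2
      rw [hfeu] at hbp
      linarith
  rw [hK, mem_convexJoin] at hmemK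
  obtain ⟨a, haF, b', hb'F, t₁, t₂, ht₁, ht₂, hsum, heq⟩ := hmemK
  have hnb'F : -b' ∈ F := by rwa [Set.mem_neg] at hb'F
  have heqx : t₁ * a x + t₂ * b' x = ‖x‖ := by
    have h1 := congrFun heq x
    simp only [Pi.add_apply, Pi.smul_apply, smul_eq_mul] at h1
    rw [h1]
    exact hux
  have hax : a x ≤ ‖x‖ := (abs_le.1 (haF.2.1 x)).2
  have hb'xabs : |b' x| ≤ ‖x‖ := by
    have := hnb'F.2.1 x
    rwa [Pi.neg_apply, abs_neg] at this
  have ht₂0 : t₂ = 0 := by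
    by_contra ht₂ne
    have ht₂pos : 0 < t₂ := lt_of_le_of_ne ht₂ (Ne.symm ht₂ne)
    have hb'x : b' x = ‖x‖ := by
      have h1 : t₁ * a x ≤ t₁ * ‖x‖ := mul_le_mul_of_nonneg_left hax ht₁
      have h3 : t₁ * ‖x‖ + t₂ * ‖x‖ = ‖x‖ := by rw [← add_mul, hsum, one_mul]
      have h2 : t₂ * ‖x‖ ≤ t₂ * b' x := by linarith
      have hge : ‖x‖ ≤ b' x := le_of_mul_le_mul_left h2 ht₂pos
      exact le_antisymm (abs_le.1 hb'xabs).2 hge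
    have hbz : (-b') z = 1 := hnb'F.1
    have hlin := hnb'F.2.2 1 (-1) z x
    have hzmx : (-b') (z - x) = (-b') z - (-b') x := by
      rw [show (1:ℝ) • z + (-1:ℝ) • x = z - x by module] at hlin
      rw [hlin]; ring
    have habs := hnb'F.2.1 (z - x)
    rw [hzmx, hbz, Pi.neg_apply, hb'x] at habs
    have := (abs_le.1 habs).2
    linarith
  have ht₁1 : t₁ = 1 := by linarith
  have hzu : z u = 1 := by
    have h1 := congrFun heq z
    simp only [Pi.add_apply, Pi.smul_apply, smul_eq_mul, ht₁1, ht₂0] at h1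
    have h2 : eu z = z u := rfl
    rw [h2] at h1
    have h3 := haF.1
    linarith [h1, h3]
  refine ⟨⟨u, hu1, ?_⟩, hzx⟩
  rw [hzx, ContinuousLinearMap.add_apply, hzu, hux]
end

section
/- Let K be a compact Hausdorff space. A function f in the unit sphere of C(K) is a spear vector of C(K) if and only if |f(t)| = 1 for every t ∈ K. -/
/-- For unimodular `a` and any `b` in an `RCLike` field, there is a unimodular `ω`
aligning `ω * b` with `a`. -/
lemma exists_omega_align {𝕜 : Type*} [RCLike 𝕜] (a b : 𝕜) (ha : ‖a‖ = 1) :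
    ∃ ω : 𝕜, ‖ω‖ = 1 ∧ ‖a + ω * b‖ = 1 + ‖b‖ := by
  rcases eq_or_ne b 0 with rfl | hb
  · exact ⟨1, norm_one, by simp [ha]⟩
  · have hbn : (‖b‖ : 𝕜) ≠ 0 := by
      simp [norm_ne_zero_iff.mpr hb]
    refine ⟨a * starRingEnd 𝕜 b / ‖b‖, ?_, ?_⟩
    · rw [norm_div, norm_mul, ha, RCLike.norm_conj, one_mul, RCLike.norm_ofReal,
        abs_of_nonneg (norm_nonneg b)]
      exact div_self (norm_ne_zero_iff.mpr hb)
    · have hmul : a * starRingEnd 𝕜 b / ‖b‖ * b = a * ‖b‖ := by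
        field_simp
        rw [mul_assoc, RCLike.conj_mul]
      rw [hmul, ← mul_one_add a ((‖b‖ : 𝕜)), norm_mul, ha, one_mul]
      have : (1 + (‖b‖ : 𝕜)) = ((1 + ‖b‖ : ℝ) : 𝕜) := by push_cast; ring
      rw [this, RCLike.norm_ofReal, abs_of_nonneg (by positivity)]

/-- for a compact Hausdorff space `K`, a norm-one `f ∈ C(K)` is a spear
vector of `C(K)` if and only if `|f(t)| = 1` for every `t ∈ K`. -/
theorem stmt9 {𝕜 K : Type*} [RCLike 𝕜] [TopologicalSpace K] [CompactSpace K] [T2Space K]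
    (f : C(K, 𝕜)) (hf : ‖f‖ = 1) :
    IsSpear 𝕜 f ↔ ∀ t : K, ‖f t‖ = 1 := by
  constructor
  · rintro ⟨-, hsp⟩ t₀
    by_contra ht₀
    have hle : ‖f t₀‖ ≤ 1 := hf ▸ f.norm_coe_le_norm t₀
    have hlt : ‖f t₀‖ < 1 := lt_of_le_of_ne hle ht₀
    set ε : ℝ := 1 - ‖f t₀‖ with hε
    have hε0 : 0 < ε := by simp only [hε]; linarith
    have hε1 : ε ≤ 1 := by have := norm_nonneg (f t₀); simp only [hε]; linarith
    set s : Set K := {t | 1 - ε / 2 ≤ ‖f t‖} with hs_def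
    have hs : IsClosed s := isClosed_le continuous_const (continuous_norm.comp f.continuous)
    have ht0s : t₀ ∉ s := by
      simp only [hs_def, Set.mem_setOf_eq, not_le]
      linarith
    obtain ⟨g, hg0, hg1, hg01⟩ := exists_continuous_zero_one_of_isClosed hs isClosed_singleton
      (Set.disjoint_singleton_right.mpr ht0s)
    set G : C(K, 𝕜) := (⟨RCLike.ofReal, RCLike.continuous_ofReal⟩ : C(ℝ, 𝕜)).comp g with hG_def
    have hGt : ∀ t, ‖G t‖ = g t := by
      intro t
      simp [hG_def, RCLike.norm_ofReal, abs_of_nonneg (hg01 t).1]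
    have hGnorm : ‖G‖ = 1 := by
      apply le_antisymm
      · exact (G.norm_le zero_le_one).mpr fun t => by rw [hGt t]; exact (hg01 t).2
      · have h1 : ‖G t₀‖ = 1 := by
          rw [hGt t₀]
          simpa using hg1 rfl
        calc (1 : ℝ) = ‖G t₀‖ := h1.symm
          _ ≤ ‖G‖ := G.norm_coe_le_norm t₀
    have key := hsp G
    rw [hGnorm] at key
    have hub : ∀ r ∈ {r : ℝ | ∃ ω : 𝕜, ‖ω‖ = 1 ∧ r = ‖f + ω • G‖}, r ≤ 2 - ε / 2 := by
      rintro r ⟨ω, hω, rfl⟩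
      refine (ContinuousMap.norm_le _ (by linarith)).mpr fun t => ?_
      by_cases hts : t ∈ s
      · have hg : g t = 0 := hg0 hts
        have hGz : G t = 0 := by
          simp [hG_def, hg]
        have hft : ‖f t‖ ≤ 1 := hf ▸ f.norm_coe_le_norm t
        simp only [ContinuousMap.add_apply, ContinuousMap.smul_apply, hGz, smul_zero, add_zero]
        linarith
      · have hft : ‖f t‖ < 1 - ε / 2 := by
          have := by simpa [hs_def] using hts
          linarith
        have h2 : ‖ω • G t‖ ≤ 1 := by
          rw [norm_smul, hω, one_mul, hGt t]
          exact (hg01 t).2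
        calc ‖(f + ω • G) t‖ = ‖f t + ω • G t‖ := by
              simp [ContinuousMap.add_apply, ContinuousMap.smul_apply]
          _ ≤ ‖f t‖ + ‖ω • G t‖ := norm_add_le _ _
          _ ≤ 2 - ε / 2 := by linarith
    have hne : {r : ℝ | ∃ ω : 𝕜, ‖ω‖ = 1 ∧ r = ‖f + ω • G‖}.Nonempty :=
      ⟨‖f + (1 : 𝕜) • G‖, 1, norm_one, rfl⟩
    have hsup := csSup_le hne hub
    rw [key] at hsup
    linarith
  · intro hft
    refine ⟨hf, fun x => ?_⟩
    have hK : Nonempty K := by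
      by_contra h
      rw [not_nonempty_iff] at h
      have : f = 0 := by ext t; exact absurd trivial (h.false t).elim
      rw [this, norm_zero] at hf
      exact zero_ne_one hf
    obtain ⟨t₀, -, hmax⟩ := isCompact_univ.exists_isMaxOn Set.univ_nonempty
      (continuous_norm.comp x.continuous).continuousOn
    have hxt₀ : ‖x‖ = ‖x t₀‖ :=
      le_antisymm ((x.norm_le (norm_nonneg _)).mpr fun t => hmax trivial)
        (x.norm_coe_le_norm t₀)
    obtain ⟨ω, hω, hal⟩ := exists_omega_align (f t₀) (x t₀) (hft t₀)
    have hbound : ∀ r ∈ {r : ℝ | ∃ ω : 𝕜, ‖ω‖ = 1 ∧ r = ‖f + ω • x‖}, r ≤ 1 + ‖x‖ := by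
      rintro r ⟨ω', hω', rfl⟩
      calc ‖f + ω' • x‖ ≤ ‖f‖ + ‖ω' • x‖ := norm_add_le _ _
        _ = 1 + ‖x‖ := by rw [hf, norm_smul, hω', one_mul]
    have hmem : (1 + ‖x‖) ∈ {r : ℝ | ∃ ω : 𝕜, ‖ω‖ = 1 ∧ r = ‖f + ω • x‖} := by
      have heq : ‖f + ω • x‖ = 1 + ‖x‖ := by
        refine le_antisymm ?_ ?_
        · calc ‖f + ω • x‖ ≤ ‖f‖ + ‖ω • x‖ := norm_add_le _ _
            _ = 1 + ‖x‖ := by rw [hf, norm_smul, hω, one_mul]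
        · calc (1 + ‖x‖ : ℝ) = ‖f t₀ + ω * x t₀‖ := by rw [hal, hxt₀]
            _ = ‖(f + ω • x) t₀‖ := by
                simp [ContinuousMap.add_apply, ContinuousMap.smul_apply, smul_eq_mul]
            _ ≤ ‖f + ω • x‖ := (f + ω • x).norm_coe_le_norm t₀
      exact ⟨ω, hω, heq.symm⟩
    exact le_antisymm (csSup_le ⟨_, hmem⟩ hbound) (le_csSup ⟨_, hbound⟩ hmem)
end

section
/- In ℓ₁(Γ) for an arbitrary index set Γ, the spear vectors are exactly the vectors of the form θ·e_γ where θ is a modulus-one scalar and e_γ is the canonical basis vector supported at γ ∈ Γ. -/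
namespace RCLike

variable {𝕜 : Type*} [RCLike 𝕜]

theorem exists_norm_eq_one_norm_add_mul_eq (a b : 𝕜) :
    ∃ ω : 𝕜, ‖ω‖ = 1 ∧ ‖a + ω * b‖ = ‖a‖ + ‖b‖ := by
  rcases eq_or_ne a 0 with rfl | ha
  · exact ⟨1, by simp⟩
  rcases eq_or_ne b 0 with rfl | hb
  · exact ⟨1, by simp⟩
  have hr : 0 ≤ ‖b‖ / ‖a‖ := by positivity
  refine ⟨(‖b‖ / ‖a‖) • (a / b), ?_, ?_⟩
  · rw [norm_smul, Real.norm_of_nonneg hr, norm_div]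
    field_simp
  · rw [smul_mul_assoc, div_mul_cancel₀ a hb,
      (SameRay.sameRay_nonneg_smul_right a hr).norm_add, norm_smul, Real.norm_of_nonneg hr]
    field_simp

theorem eq_one_of_norm_add_mul_self_eq {a ω : 𝕜} (ha : a ≠ 0) (hω : ‖ω‖ = 1)
    (h : ‖a + ω * a‖ = ‖a‖ + ‖ω * a‖) : ω = 1 :=
  (mul_eq_right₀ ha).mp
    (eq_of_norm_eq_of_norm_add_eq (by rw [norm_mul, hω, one_mul]) h).symm

end RCLike

theorem isSpear_iff_exists_norm_add_smul_eq {𝕜 X : Type*} [RCLike 𝕜] [NormedAddCommGroup X]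
    [NormedSpace 𝕜 X] {z : X} :
    IsSpear 𝕜 z ↔ ‖z‖ = 1 ∧ ∀ x : X, ∃ ω : 𝕜, ‖ω‖ = 1 ∧ ‖z + ω • x‖ = ‖z‖ + ‖x‖ := by
  refine and_congr_right fun hz => forall_congr' fun x => ?_
  set f : 𝕜 → ℝ := fun ω => ‖z + ω • x‖
  have hS : {r : ℝ | ∃ ω : 𝕜, ‖ω‖ = 1 ∧ r = f ω} = f '' Metric.sphere 0 1 := by
    ext r
    simp [eq_comm]
  have hbound : ∀ r ∈ f '' Metric.sphere 0 1, r ≤ 1 + ‖x‖ := by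
    rintro _ ⟨ω, hω, rfl⟩
    calc f ω ≤ ‖z‖ + ‖ω • x‖ := norm_add_le _ _
      _ = 1 + ‖x‖ := by rw [hz, norm_smul, mem_sphere_zero_iff_norm.mp hω, one_mul]
  rw [hS, hz]
  constructor
  · intro h
    have hmem := ((isCompact_sphere (0 : 𝕜) 1).image (by fun_prop)).sSup_mem
      ⟨f 1, 1, by simp, rfl⟩
    obtain ⟨ω, hω, hfω⟩ := h ▸ hmem
    exact ⟨ω, mem_sphere_zero_iff_norm.mp hω, hfω⟩
  · rintro ⟨ω, hω, hfω⟩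
    exact IsGreatest.csSup_eq ⟨⟨ω, mem_sphere_zero_iff_norm.mpr hω, hfω⟩, hbound⟩

namespace lp

variable {ι : Type*} {E : ι → Type*} [∀ i, NormedAddCommGroup (E i)]

theorem norm_eq_tsum_norm (f : lp E 1) : ‖f‖ = ∑' i, ‖f i‖ := by
  simpa using norm_eq_tsum_rpow (by norm_num) f

theorem summable_norm (f : lp E 1) : Summable fun i => ‖f i‖ := by
  simpa using (lp.memℓp f).summable (by norm_num)

theorem norm_add_eq_iff {f g : lp E 1} :
    ‖f + g‖ = ‖f‖ + ‖g‖ ↔ ∀ i, ‖f i + g i‖ = ‖f i‖ + ‖g i‖ := by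
  have hfg : Summable fun i => ‖f i + g i‖ := by simpa using summable_norm (f + g)
  rw [norm_eq_tsum_norm, norm_eq_tsum_norm f, norm_eq_tsum_norm g,
    ← (summable_norm f).tsum_add (summable_norm g)]
  simp only [coeFn_add, Pi.add_apply]
  refine ⟨fun h i => ?_, tsum_congr⟩
  by_contra hi
  exact (Summable.tsum_lt_tsum (fun j => norm_add_le (f j) (g j))
    ((norm_add_le _ _).lt_of_ne hi) hfg ((summable_norm f).add (summable_norm g))).ne h

theorem eq_single_of_forall_ne [DecidableEq ι] {p} (f : lp E p) {i : ι}
    (h : ∀ j ≠ i, f j = 0) : f = lp.single p i (f i) := by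
  ext j
  rcases eq_or_ne j i with rfl | hj
  · simp
  · simp [lp.single_apply, hj, h j hj]

end lp

section SpearL1

variable {𝕜 Γ : Type*} [RCLike 𝕜]

theorem exists_norm_single_add_smul_eq [DecidableEq Γ] (γ : Γ) (a : 𝕜)
    (x : lp (fun _ : Γ => 𝕜) 1) :
    ∃ ω : 𝕜, ‖ω‖ = 1 ∧
      ‖(lp.single 1 γ a : lp (fun _ : Γ => 𝕜) 1) + ω • x‖ = ‖a‖ + ‖x‖ := by
  obtain ⟨ω, hω, hγ⟩ := RCLike.exists_norm_eq_one_norm_add_mul_eq a (x γ)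
  refine ⟨ω, hω, ?_⟩
  rw [← lp.norm_single (E := fun _ : Γ => 𝕜) one_pos γ a, ← one_mul ‖x‖, ← hω, ← norm_smul,
    lp.norm_add_eq_iff]
  intro i
  rcases eq_or_ne i γ with rfl | hi
  · simpa [hω] using hγ
  · simp [lp.single_apply, hi]

theorem apply_eq_zero_of_apply_ne_zero {z : lp (fun _ : Γ => 𝕜) 1}
    (hz : ∀ x, ∃ ω : 𝕜, ‖ω‖ = 1 ∧ ‖z + ω • x‖ = ‖z‖ + ‖x‖) {i j : Γ} (hij : i ≠ j)
    (hi : z i ≠ 0) : z j = 0 := by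
  classical
  by_contra hj
  obtain ⟨ω, hω, h⟩ := hz (lp.single 1 i (z i) - lp.single 1 j (z j))
  rw [← one_mul ‖_ - _‖, ← hω, ← norm_smul, lp.norm_add_eq_iff] at h
  simp only [lp.coeFn_smul, Pi.smul_apply, lp.coeFn_sub, Pi.sub_apply, lp.single_apply,
    smul_eq_mul] at h
  have hω₁ : ω = 1 := RCLike.eq_one_of_norm_add_mul_self_eq hi hω (by simpa [hij] using h i)
  have hω₂ : -ω = 1 := RCLike.eq_one_of_norm_add_mul_self_eq hj (by rwa [norm_neg])
    (by simpa [hij.symm, sub_eq_add_neg] using h j)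
  rw [hω₁] at hω₂
  norm_num at hω₂

end SpearL1

/-- in `ℓ₁(Γ)` the spear vectors are exactly the vectors `θ • e_γ`
with `θ` a modulus-one scalar and `e_γ` a canonical basis vector. -/
theorem stmt10 {𝕜 Γ : Type*} [RCLike 𝕜] [DecidableEq Γ]
    (z : lp (fun _ : Γ => 𝕜) 1) :
    IsSpear 𝕜 z ↔ ∃ θ : 𝕜, ∃ γ : Γ, ‖θ‖ = 1 ∧ z = θ • lp.single 1 γ 1 := by
  simp only [isSpear_iff_exists_norm_add_smul_eq, ← lp.single_smul, smul_eq_mul, mul_one]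
  constructor
  · rintro ⟨hz, hspear⟩
    obtain ⟨γ, hγ⟩ : ∃ γ, z γ ≠ 0 := by
      by_contra! h
      exact one_ne_zero (hz.symm.trans (norm_eq_zero.mpr (lp.ext (funext h))))
    have hsingle : z = lp.single 1 γ (z γ) :=
      lp.eq_single_of_forall_ne z fun j hj => apply_eq_zero_of_apply_ne_zero hspear hj.symm hγ
    refine ⟨z γ, γ, ?_, hsingle⟩
    rw [← lp.norm_single (E := fun _ : Γ => 𝕜) one_pos γ (z γ), ← hsingle, hz]
  · rintro ⟨θ, γ, hθ, rfl⟩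
    rw [lp.norm_single one_pos]
    exact ⟨hθ, exists_norm_single_add_smul_eq γ θ⟩
end

section
/- Let X₁, X₂ be Banach spaces and X = X₁ ⊕₁ X₂ their ℓ₁-sum. Then (z₁, z₂) ∈ S_X is a spear vector of X if and only if either z₁ is a spear vector of X₁ and z₂ = 0, or z₁ = 0 and z₂ is a spear vector of X₂. -/
set_option maxHeartbeats 1000000

section aux

variable {𝕜 : Type*} [RCLike 𝕜]

lemma aux_l1norm {X₁ X₂ : Type*} [NormedAddCommGroup X₁] [NormedAddCommGroup X₂]
    (x : WithLp 1 (X₁ × X₂)) : ‖x‖ = ‖x.fst‖ + ‖x.snd‖ := by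
  rw [WithLp.prod_norm_eq_add (by norm_num)]
  norm_num

/-- if `z` is a spear then the sup of the shifted set `{‖z+ωx‖+c}` is `1+‖x‖+c`. -/
lemma aux_sSup_shift {X : Type*} [NormedAddCommGroup X] [NormedSpace 𝕜 X]
    {z : X} (hz : IsSpear 𝕜 z) (x : X) (c : ℝ) :
    sSup {r : ℝ | ∃ ω : 𝕜, ‖ω‖ = 1 ∧ r = ‖z + ω • x‖ + c} = 1 + ‖x‖ + c := by
  obtain ⟨hn, hs⟩ := hz
  have hub : ∀ r ∈ {r : ℝ | ∃ ω : 𝕜, ‖ω‖ = 1 ∧ r = ‖z + ω • x‖ + c}, r ≤ 1 + ‖x‖ + c := by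
    rintro r ⟨ω, hω, rfl⟩
    have : ‖z + ω • x‖ ≤ ‖z‖ + ‖ω • x‖ := norm_add_le _ _
    rw [norm_smul, hω, one_mul, hn] at this
    linarith
  have hne : ∃ r, r ∈ {r : ℝ | ∃ ω : 𝕜, ‖ω‖ = 1 ∧ r = ‖z + ω • x‖ + c} :=
    ⟨_, 1, norm_one, rfl⟩
  refine le_antisymm (csSup_le ⟨_, hne.choose_spec⟩ hub) ?_
  have hbdd : BddAbove {r : ℝ | ∃ ω : 𝕜, ‖ω‖ = 1 ∧ r = ‖z + ω • x‖ + c} := ⟨_, hub⟩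
  have h1 : ∀ r ∈ {r : ℝ | ∃ ω : 𝕜, ‖ω‖ = 1 ∧ r = ‖z + ω • x‖},
      r ≤ sSup {r : ℝ | ∃ ω : 𝕜, ‖ω‖ = 1 ∧ r = ‖z + ω • x‖ + c} - c := by
    rintro r ⟨ω, hω, rfl⟩
    have := le_csSup hbdd (show ‖z + ω • x‖ + c ∈ _ from ⟨ω, hω, rfl⟩)
    linarith
  have h2 := csSup_le (⟨_, 1, norm_one, rfl⟩ :
    {r : ℝ | ∃ ω : 𝕜, ‖ω‖ = 1 ∧ r = ‖z + ω • x‖}.Nonempty) h1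
  rw [hs x] at h2
  linarith

end aux

/-- in the `ℓ₁`-sum `X₁ ⊕₁ X₂` (the product with the sum norm),
`(z₁, z₂)` is a spear vector if and only if either `z₁` is a spear vector of `X₁` and
`z₂ = 0`, or `z₁ = 0` and `z₂` is a spear vector of `X₂`. -/
theorem stmt12 {𝕜 X₁ X₂ : Type*} [RCLike 𝕜]
    [NormedAddCommGroup X₁] [NormedSpace 𝕜 X₁] [CompleteSpace X₁]
    [NormedAddCommGroup X₂] [NormedSpace 𝕜 X₂] [CompleteSpace X₂]
    (z : WithLp 1 (X₁ × X₂)) :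
    IsSpear 𝕜 z ↔
      (IsSpear 𝕜 (WithLp.equiv 1 (X₁ × X₂) z).1 ∧ (WithLp.equiv 1 (X₁ × X₂) z).2 = 0) ∨
      ((WithLp.equiv 1 (X₁ × X₂) z).1 = 0 ∧ IsSpear 𝕜 (WithLp.equiv 1 (X₁ × X₂) z).2) := by
  constructor
  · rintro ⟨hn, hs⟩
    have hn' : ‖z.fst‖ + ‖z.snd‖ = 1 := by rw [← aux_l1norm z, hn]
    -- Step 1: one of the components is zero
    have hzero : z.fst = 0 ∨ z.snd = 0 := by
      by_contra h
      push_neg at h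
      obtain ⟨h1, h2⟩ := h
      set a : ℝ := ‖z.fst‖ with ha_def
      set b : ℝ := ‖z.snd‖ with hb_def
      have ha : 0 < a := norm_pos_iff.mpr h1
      have hb : 0 < b := norm_pos_iff.mpr h2
      have hane : ((a : ℝ) : 𝕜) ≠ 0 := by
        simpa using ha.ne'
      have hbne : ((b : ℝ) : 𝕜) ≠ 0 := by
        simpa using hb.ne'
      set x : WithLp 1 (X₁ × X₂) :=
        (WithLp.equiv 1 (X₁ × X₂)).symm
          (((b / a : ℝ) : 𝕜) • z.fst, -(((a / b : ℝ) : 𝕜) • z.snd)) with hx_def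
      have hxfst : x.fst = ((b / a : ℝ) : 𝕜) • z.fst := rfl
      have hxsnd : x.snd = -(((a / b : ℝ) : 𝕜) • z.snd) := rfl
      have hxnorm : ‖x‖ = 1 := by
        rw [aux_l1norm x, hxfst, hxsnd, norm_neg, norm_smul, norm_smul,
          RCLike.norm_ofReal, RCLike.norm_ofReal,
          abs_of_pos (div_pos hb ha), abs_of_pos (div_pos ha hb)]
        field_simp
        rw [← ha_def, ← hb_def]
        linear_combination (b * a) * hn'
      set s : ℝ := Real.sqrt (a ^ 2 + b ^ 2) with hs_def
      have hs0 : 0 ≤ s := Real.sqrt_nonneg _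
      have hs2 : s ^ 2 = a ^ 2 + b ^ 2 := Real.sq_sqrt (by positivity)
      -- each element of the spear set for x is ≤ 2*s
      have hbound : ∀ r ∈ {r : ℝ | ∃ ω : 𝕜, ‖ω‖ = 1 ∧ r = ‖z + ω • x‖}, r ≤ 2 * s := by
        rintro r ⟨ω, hω, rfl⟩
        have hfst : (z + ω • x).fst = (1 + ω * ((b / a : ℝ) : 𝕜)) • z.fst := by
          show z.fst + ω • (((b / a : ℝ) : 𝕜) • z.fst) = _
          rw [smul_smul, add_smul, one_smul]
        have hsnd : (z + ω • x).snd = (1 - ω * ((a / b : ℝ) : 𝕜)) • z.snd := by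
          show z.snd + ω • (-(((a / b : ℝ) : 𝕜) • z.snd)) = _
          rw [smul_neg, smul_smul, ← sub_eq_add_neg, sub_smul, one_smul]
        have hnfst : ‖(z + ω • x).fst‖ = ‖((a : ℝ) : 𝕜) + ω * ((b : ℝ) : 𝕜)‖ := by
          rw [hfst, norm_smul]
          have hmul : ((a : ℝ) : 𝕜) * (1 + ω * ((b / a : ℝ) : 𝕜))
              = ((a : ℝ) : 𝕜) + ω * ((b : ℝ) : 𝕜) := by
            push_cast
            field_simp
          rw [← hmul, norm_mul, RCLike.norm_ofReal, abs_of_pos ha]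
          ring
        have hnsnd : ‖(z + ω • x).snd‖ = ‖((b : ℝ) : 𝕜) - ω * ((a : ℝ) : 𝕜)‖ := by
          rw [hsnd, norm_smul]
          have hmul : ((b : ℝ) : 𝕜) * (1 - ω * ((a / b : ℝ) : 𝕜))
              = ((b : ℝ) : 𝕜) - ω * ((a : ℝ) : 𝕜) := by
            push_cast
            field_simp
          rw [← hmul, norm_mul, RCLike.norm_ofReal, abs_of_pos hb]
          ring
        -- key symmetry : ‖b - ωa‖ = ‖a - ωb‖
        have hconj1 : ω * (starRingEnd 𝕜) ω = 1 := by
          rw [RCLike.mul_conj, hω]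
          norm_num
        have hkey : ‖((b : ℝ) : 𝕜) - ω * ((a : ℝ) : 𝕜)‖ = ‖((a : ℝ) : 𝕜) - ω * ((b : ℝ) : 𝕜)‖ := by
          have e1 : ω * (starRingEnd 𝕜) (((b : ℝ) : 𝕜) - ω * ((a : ℝ) : 𝕜))
              = ω * ((b : ℝ) : 𝕜) - ((a : ℝ) : 𝕜) := by
            rw [map_sub, map_mul, RCLike.conj_ofReal, RCLike.conj_ofReal, mul_sub]
            rw [show ω * ((starRingEnd 𝕜) ω * ((a : ℝ) : 𝕜))
                = (ω * (starRingEnd 𝕜) ω) * ((a : ℝ) : 𝕜) by ring, hconj1, one_mul]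
          calc ‖((b : ℝ) : 𝕜) - ω * ((a : ℝ) : 𝕜)‖
              = ‖(starRingEnd 𝕜) (((b : ℝ) : 𝕜) - ω * ((a : ℝ) : 𝕜))‖ := (RCLike.norm_conj _).symm
            _ = ‖ω * (starRingEnd 𝕜) (((b : ℝ) : 𝕜) - ω * ((a : ℝ) : 𝕜))‖ := by
                rw [norm_mul, hω, one_mul]
            _ = ‖ω * ((b : ℝ) : 𝕜) - ((a : ℝ) : 𝕜)‖ := by rw [e1]
            _ = ‖((a : ℝ) : 𝕜) - ω * ((b : ℝ) : 𝕜)‖ := norm_sub_rev _ _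
        -- parallelogram law
        set u : ℝ := ‖((a : ℝ) : 𝕜) + ω * ((b : ℝ) : 𝕜)‖ with hu_def
        set v : ℝ := ‖((a : ℝ) : 𝕜) - ω * ((b : ℝ) : 𝕜)‖ with hv_def
        have hpar := parallelogram_law_with_norm 𝕜 ((a : ℝ) : 𝕜) (ω * ((b : ℝ) : 𝕜))
        have hna : ‖((a : ℝ) : 𝕜)‖ = a := by rw [RCLike.norm_ofReal, abs_of_pos ha]
        have hnb : ‖ω * ((b : ℝ) : 𝕜)‖ = b := by
          rw [norm_mul, hω, one_mul, RCLike.norm_ofReal, abs_of_pos hb]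
        rw [← hu_def, ← hv_def, hna, hnb] at hpar
        have hu0 : 0 ≤ u := norm_nonneg _
        have hv0 : 0 ≤ v := norm_nonneg _
        have huv : u + v ≤ 2 * s := by
          nlinarith [sq_nonneg (u - v), sq_nonneg (u + v - 2 * s), sq_nonneg (u + v + 2 * s)]
        rw [aux_l1norm, hnfst, hnsnd, hkey]
        exact huv
      have hsup := hs x
      have hle := csSup_le (⟨_, 1, norm_one, rfl⟩ :
        {r : ℝ | ∃ ω : 𝕜, ‖ω‖ = 1 ∧ r = ‖z + ω • x‖}.Nonempty) hbound
      rw [hsup, hxnorm] at hle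
      -- 2 ≤ 2*s but s < 1
      have hab : a ^ 2 + b ^ 2 < 1 := by nlinarith [mul_pos ha hb, hn']
      have hs1 : s < 1 := by nlinarith [hs2, hab, hs0]
      linarith
    rcases hzero with hz1 | hz2
    · right
      refine ⟨hz1, ?_, ?_⟩
      · have : ‖z.fst‖ = 0 := by rw [hz1, norm_zero]
        show ‖z.snd‖ = 1
        linarith
      · intro x₂
        set x : WithLp 1 (X₁ × X₂) := (WithLp.equiv 1 (X₁ × X₂)).symm (0, x₂) with hx_def
        have hset : {r : ℝ | ∃ ω : 𝕜, ‖ω‖ = 1 ∧ r = ‖(WithLp.equiv 1 (X₁ × X₂) z).2 + ω • x₂‖}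
            = {r : ℝ | ∃ ω : 𝕜, ‖ω‖ = 1 ∧ r = ‖z + ω • x‖} := by
          ext r
          have hval : ∀ ω : 𝕜, ‖z + ω • x‖ = ‖z.snd + ω • x₂‖ := by
            intro ω
            rw [aux_l1norm]
            have h1 : (z + ω • x).fst = 0 := by
              show z.fst + ω • (0 : X₁) = 0
              rw [hz1, smul_zero, add_zero]
            have h2 : (z + ω • x).snd = z.snd + ω • x₂ := rfl
            rw [h1, h2, norm_zero, zero_add]
          constructor
          · rintro ⟨ω, hω, rfl⟩; exact ⟨ω, hω, (hval ω).symm⟩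
          · rintro ⟨ω, hω, rfl⟩; exact ⟨ω, hω, hval ω⟩
        rw [hset, hs x, aux_l1norm x]
        have : x.fst = (0 : X₁) := rfl
        rw [this, norm_zero, zero_add]
        rfl
    · left
      refine ⟨⟨?_, ?_⟩, hz2⟩
      · have : ‖z.snd‖ = 0 := by rw [hz2, norm_zero]
        show ‖z.fst‖ = 1
        linarith
      · intro x₁
        set x : WithLp 1 (X₁ × X₂) := (WithLp.equiv 1 (X₁ × X₂)).symm (x₁, 0) with hx_def
        have hset : {r : ℝ | ∃ ω : 𝕜, ‖ω‖ = 1 ∧ r = ‖(WithLp.equiv 1 (X₁ × X₂) z).1 + ω • x₁‖}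
            = {r : ℝ | ∃ ω : 𝕜, ‖ω‖ = 1 ∧ r = ‖z + ω • x‖} := by
          ext r
          have hval : ∀ ω : 𝕜, ‖z + ω • x‖ = ‖z.fst + ω • x₁‖ := by
            intro ω
            rw [aux_l1norm]
            have h2 : (z + ω • x).snd = 0 := by
              show z.snd + ω • (0 : X₂) = 0
              rw [hz2, smul_zero, add_zero]
            have h1 : (z + ω • x).fst = z.fst + ω • x₁ := rfl
            rw [h1, h2, norm_zero, add_zero]
          constructor
          · rintro ⟨ω, hω, rfl⟩; exact ⟨ω, hω, (hval ω).symm⟩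
          · rintro ⟨ω, hω, rfl⟩; exact ⟨ω, hω, hval ω⟩
        rw [hset, hs x, aux_l1norm x]
        have : x.snd = (0 : X₂) := rfl
        rw [this, norm_zero, add_zero]
        rfl
  · rintro (⟨hz1, hz2⟩ | ⟨hz1, hz2⟩)
    · constructor
      · rw [aux_l1norm z]
        have h2 : ‖z.snd‖ = 0 := by
          rw [show z.snd = (0 : X₂) from hz2, norm_zero]
        rw [h2, add_zero]
        exact hz1.1
      · intro x
        have hval : ∀ ω : 𝕜, ‖ω‖ = 1 →
            ‖z + ω • x‖ = ‖(WithLp.equiv 1 (X₁ × X₂) z).1 + ω • x.fst‖ + ‖x.snd‖ := by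
          intro ω hω
          rw [aux_l1norm]
          have h1 : (z + ω • x).fst = z.fst + ω • x.fst := rfl
          have h2 : (z + ω • x).snd = z.snd + ω • x.snd := rfl
          rw [h1, h2, show z.snd = (0 : X₂) from hz2, zero_add, norm_smul, hω, one_mul]
          rfl
        have hset : {r : ℝ | ∃ ω : 𝕜, ‖ω‖ = 1 ∧ r = ‖z + ω • x‖}
            = {r : ℝ | ∃ ω : 𝕜, ‖ω‖ = 1 ∧
                r = ‖(WithLp.equiv 1 (X₁ × X₂) z).1 + ω • x.fst‖ + ‖x.snd‖} := by
          ext r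
          constructor
          · rintro ⟨ω, hω, rfl⟩; exact ⟨ω, hω, hval ω hω⟩
          · rintro ⟨ω, hω, rfl⟩; exact ⟨ω, hω, (hval ω hω).symm⟩
        rw [hset, aux_sSup_shift hz1 x.fst ‖x.snd‖, aux_l1norm x]
        ring
    · constructor
      · rw [aux_l1norm z]
        have h1 : ‖z.fst‖ = 0 := by
          rw [show z.fst = (0 : X₁) from hz1, norm_zero]
        rw [h1, zero_add]
        exact hz2.1
      · intro x
        have hval : ∀ ω : 𝕜, ‖ω‖ = 1 →
            ‖z + ω • x‖ = ‖(WithLp.equiv 1 (X₁ × X₂) z).2 + ω • x.snd‖ + ‖x.fst‖ := by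
          intro ω hω
          rw [aux_l1norm]
          have h1 : (z + ω • x).fst = z.fst + ω • x.fst := rfl
          have h2 : (z + ω • x).snd = z.snd + ω • x.snd := rfl
          rw [h1, h2, show z.fst = (0 : X₁) from hz1, zero_add, norm_smul, hω, one_mul]
          exact add_comm _ _
        have hset : {r : ℝ | ∃ ω : 𝕜, ‖ω‖ = 1 ∧ r = ‖z + ω • x‖}
            = {r : ℝ | ∃ ω : 𝕜, ‖ω‖ = 1 ∧
                r = ‖(WithLp.equiv 1 (X₁ × X₂) z).2 + ω • x.snd‖ + ‖x.fst‖} := by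
          ext r
          constructor
          · rintro ⟨ω, hω, rfl⟩; exact ⟨ω, hω, hval ω hω⟩
          · rintro ⟨ω, hω, rfl⟩; exact ⟨ω, hω, (hval ω hω).symm⟩
        rw [hset, aux_sSup_shift hz2 x.snd ‖x.fst‖, aux_l1norm x]
        ring
end

section
/- If the linear span of a norm-one vector z in a Banach space X is an L-summand of X, then z is a spear vector of X. -/
section

variable {𝕜 X : Type*} [RCLike 𝕜] [NormedAddCommGroup X] [NormedSpace 𝕜 X]

theorem isSpear_of_forall_exists_norm_add_smul_eq {z : X} (hz : ‖z‖ = 1)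
    (h : ∀ x : X, ∃ ω : 𝕜, ‖ω‖ = 1 ∧ ‖z + ω • x‖ = 1 + ‖x‖) : IsSpear 𝕜 z := by
  refine ⟨hz, fun x => IsGreatest.csSup_eq ⟨?_, ?_⟩⟩
  · obtain ⟨ω, hω, hmax⟩ := h x
    exact ⟨ω, hω, hmax.symm⟩
  · rintro r ⟨ω, hω, rfl⟩
    calc ‖z + ω • x‖ ≤ ‖z‖ + ‖ω • x‖ := norm_add_le _ _
      _ = 1 + ‖x‖ := by rw [hz, norm_smul, hω, one_mul]

theorem exists_norm_add_smul_eq_of_lSummand_span {z : X} (hz : ‖z‖ = 1) {Z : Submodule 𝕜 X}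
    (hcod : Codisjoint (Submodule.span 𝕜 {z}) Z)
    (hsum : ∀ y ∈ Submodule.span 𝕜 {z}, ∀ w ∈ Z, ‖y + w‖ = ‖y‖ + ‖w‖) (x : X) :
    ∃ ω : 𝕜, ‖ω‖ = 1 ∧ ‖z + ω • x‖ = 1 + ‖x‖ := by
  obtain ⟨y, hy, w, hw, rfl⟩ := Submodule.mem_sup.mp (hcod.eq_top ▸ Submodule.mem_top (x := x))
  obtain ⟨a, rfl⟩ := Submodule.mem_span_singleton.mp hy
  obtain ⟨ω, hω, hωa⟩ := RCLike.exists_norm_eq_mul_self a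
  have hz_mem : z ∈ Submodule.span 𝕜 {z} := Submodule.mem_span_singleton_self z
  have hrot : z + ω • (a • z + w) = ((1 + ‖a‖ : ℝ) : 𝕜) • z + ω • w := by
    rw [RCLike.ofReal_add, RCLike.ofReal_one, hωa]
    module
  refine ⟨ω, hω, ?_⟩
  rw [hrot, hsum _ (Submodule.smul_mem _ _ hz_mem) _ (Submodule.smul_mem _ _ hw), hsum _ hy _ hw]
  simp only [norm_smul, hz, hω, RCLike.norm_ofReal, abs_of_nonneg (by positivity : 0 ≤ 1 + ‖a‖)]
  ring

end

theorem stmt13_general {𝕜 X : Type*} [RCLike 𝕜] [NormedAddCommGroup X] [NormedSpace 𝕜 X]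
    (z : X) (hz : ‖z‖ = 1)
    (hL : ∃ Z : Submodule 𝕜 X, IsClosed (Z : Set X) ∧
      IsCompl (Submodule.span 𝕜 {z}) Z ∧
      ∀ y ∈ Submodule.span 𝕜 {z}, ∀ w ∈ Z, ‖y + w‖ = ‖y‖ + ‖w‖) :
    IsSpear 𝕜 z := by
  obtain ⟨Z, -, hcompl, hsum⟩ := hL
  exact isSpear_of_forall_exists_norm_add_smul_eq hz
    (exists_norm_add_smul_eq_of_lSummand_span hz hcompl.codisjoint hsum)

/-- if the linear span of a norm-one vector `z` is an `L`-summand of `X`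
(i.e. `X = span{z} ⊕₁ Z` for some closed subspace `Z`, meaning `‖y + w‖ = ‖y‖ + ‖w‖`
for `y ∈ span{z}`, `w ∈ Z`), then `z` is a spear vector of `X`. -/
theorem stmt13 {𝕜 X : Type*} [RCLike 𝕜] [NormedAddCommGroup X] [NormedSpace 𝕜 X]
    [CompleteSpace X] (z : X) (hz : ‖z‖ = 1)
    (hL : ∃ Z : Submodule 𝕜 X, IsClosed (Z : Set X) ∧
      IsCompl (Submodule.span 𝕜 {z}) Z ∧
      ∀ y ∈ Submodule.span 𝕜 {z}, ∀ w ∈ Z, ‖y + w‖ = ‖y‖ + ‖w‖) :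
    IsSpear 𝕜 z :=
  stmt13_general z hz hL
end

section
/- Let X, Y be Banach spaces and G : X → Y a norm-one rank-one operator, written G = x₀* ⊗ y₀ with x₀* ∈ S_{X*} and y₀ ∈ S_Y (i.e. Gx = x₀*(x)·y₀). If ‖G + 𝕋T‖ = 1 + ‖T‖ for every rank-one operator T : X → Y, then x₀* is a spear vector of X* and y₀ is a spear vector of Y. -/
/-- let `G = x₀* ⊗ y₀` (i.e. `Gx = x₀*(x) • y₀`) be a norm-one rank-one
operator, with `x₀* ∈ S_{X*}`, `y₀ ∈ S_Y`. If `‖G + 𝕋T‖ = 1 + ‖T‖` for every rank-one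
operator `T = φ ⊗ y`, then `x₀*` is a spear vector of `X*` and `y₀` is a spear vector
of `Y`. -/
theorem stmt15 {𝕜 X Y : Type*} [RCLike 𝕜]
    [NormedAddCommGroup X] [NormedSpace 𝕜 X] [CompleteSpace X]
    [NormedAddCommGroup Y] [NormedSpace 𝕜 Y] [CompleteSpace Y]
    (x₀ : StrongDual 𝕜 X) (hx₀ : ‖x₀‖ = 1) (y₀ : Y) (hy₀ : ‖y₀‖ = 1)
    (h : ∀ (φ : StrongDual 𝕜 X) (y : Y),
      sSup {r : ℝ | ∃ ω : 𝕜, ‖ω‖ = 1 ∧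
          r = ‖x₀.smulRight y₀ + ω • φ.smulRight y‖} =
        1 + ‖φ.smulRight y‖) :
    IsSpear 𝕜 x₀ ∧ IsSpear 𝕜 y₀ := by
  have key : ∀ (f : StrongDual 𝕜 X) (z : Y), ‖f.smulRight z‖ = ‖f‖ * ‖z‖ :=
    fun f z => ContinuousLinearMap.norm_smulRight_apply f z
  constructor
  · refine ⟨hx₀, fun φ => ?_⟩
    have h1 := h φ y₀
    have hset : {r : ℝ | ∃ ω : 𝕜, ‖ω‖ = 1 ∧ r = ‖x₀.smulRight y₀ + ω • φ.smulRight y₀‖}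
        = {r : ℝ | ∃ ω : 𝕜, ‖ω‖ = 1 ∧ r = ‖x₀ + ω • φ‖} := by
      have hop : ∀ ω : 𝕜, x₀.smulRight y₀ + ω • φ.smulRight y₀
          = (x₀ + ω • φ).smulRight y₀ := by
        intro ω; ext x; simp [smul_smul, add_smul]
      ext r
      constructor
      · rintro ⟨ω, hω, rfl⟩
        exact ⟨ω, hω, by rw [hop ω, key, hy₀, mul_one]⟩
      · rintro ⟨ω, hω, rfl⟩
        exact ⟨ω, hω, by rw [hop ω, key, hy₀, mul_one]⟩
    rw [hset, key, hy₀, mul_one] at h1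
    exact h1
  · refine ⟨hy₀, fun y => ?_⟩
    have h1 := h x₀ y
    have hset : {r : ℝ | ∃ ω : 𝕜, ‖ω‖ = 1 ∧ r = ‖x₀.smulRight y₀ + ω • x₀.smulRight y‖}
        = {r : ℝ | ∃ ω : 𝕜, ‖ω‖ = 1 ∧ r = ‖y₀ + ω • y‖} := by
      have hop : ∀ ω : 𝕜, x₀.smulRight y₀ + ω • x₀.smulRight y
          = x₀.smulRight (y₀ + ω • y) := by
        intro ω; ext x
        simp [smul_smul, smul_add, mul_comm]
      ext r
      constructor
      · rintro ⟨ω, hω, rfl⟩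
        exact ⟨ω, hω, by rw [hop ω, key, hx₀, one_mul]⟩
      · rintro ⟨ω, hω, rfl⟩
        exact ⟨ω, hω, by rw [hop ω, key, hx₀, one_mul]⟩
    rw [hset, key, hx₀, one_mul] at h1
    exact h1
end

section
/- Let X be a Banach space, A ⊂ X a bounded set, x* ∈ X*, and ε, δ > 0. Then every point of the slice Slice(conv A, x*, εδ) = {x ∈ conv A : Re x*(x) > sup_{conv A} Re x* − εδ} lies within distance (2δ − δ²)/(1 − δ) · ‖A‖ of the convex hull of the slice Slice(A, x*, ε) of A (assuming δ < 1). -/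
/-!
Split `A` into the good part `G = Slice(A, x*, ε)` and the bad part `B = A \ G`. A point `x`
of `conv A`, the convex join of `conv G` and `conv B`, is `(1 - μ) s + μ t` with `s ∈ conv G`
and `t ∈ conv B`, so `Re x*(x) ≤ sup Re x* - μ ε`; membership of `x` in the `εδ`-slice then
forces `μ < δ`, and `‖x - s‖ = μ ‖t - s‖ ≤ 2 δ ‖A‖ ≤ (2δ − δ²)/(1 − δ) · ‖A‖`.
-/

open Metric Set AffineMap

section

variable {E : Type*}

theorem LinearMap.map_le_of_mem_convexHull [AddCommGroup E] [Module ℝ E]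
    (f : E →ₗ[ℝ] ℝ) {s : Set E} {c : ℝ} (h : ∀ a ∈ s, f a ≤ c) {x : E}
    (hx : x ∈ convexHull ℝ s) : f x ≤ c :=
  (convex_halfSpace_le f.isLinear c).convexHull_subset_iff.2 h hx

theorem norm_le_of_mem_convexHull [SeminormedAddCommGroup E] [NormedSpace ℝ E]
    {s : Set E} {N : ℝ} (h : ∀ a ∈ s, ‖a‖ ≤ N) {x : E} (hx : x ∈ convexHull ℝ s) :
    ‖x‖ ≤ N :=
  mem_closedBall_zero_iff.1 <| (convex_closedBall 0 N).convexHull_subset_iff.2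
    (fun a ha => mem_closedBall_zero_iff.2 (h a ha)) hx

theorem infDist_convexHull_superlevelSet_le [NormedAddCommGroup E] [NormedSpace ℝ E]
    (ψ : E →ₗ[ℝ] ℝ) {A : Set E} {M N ε δ : ℝ} (hε : 0 < ε) (hδ : 0 ≤ δ)
    (hN : ∀ a ∈ A, ‖a‖ ≤ N) (hM : ∀ a ∈ A, ψ a ≤ M) {x : E} (hx : x ∈ convexHull ℝ A)
    (hxψ : M - ε * δ < ψ x) :
    infDist x (convexHull ℝ {a ∈ A | M - ε < ψ a}) ≤ 2 * δ * N := by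
  set G := {a ∈ A | M - ε < ψ a}
  set B := {a ∈ A | ψ a ≤ M - ε}
  have hN0 : 0 ≤ N := by
    obtain ⟨a, ha⟩ := convexHull_nonempty_iff.1 ⟨x, hx⟩
    exact (norm_nonneg a).trans (hN a ha)
  have hA_split : A = G ∪ B := by
    ext a
    simp only [G, B, mem_union, mem_ofPred_eq, ← and_or_left, lt_or_ge, and_true]
  rcases G.eq_empty_or_nonempty with hG | hG
  · rw [hG, convexHull_empty, infDist_empty]
    positivity
  rcases B.eq_empty_or_nonempty with hB | hB
  · rw [hA_split, hB, union_empty] at hx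
    rw [infDist_zero_of_mem hx]
    positivity
  rw [hA_split, convexHull_union hG hB, mem_convexJoin] at hx
  obtain ⟨s, hs, t, ht, hxst⟩ := hx
  rw [segment_eq_image_lineMap] at hxst
  obtain ⟨μ, ⟨hμ0, hμ1⟩, rfl⟩ := hxst
  have hψs : ψ s ≤ M := ψ.map_le_of_mem_convexHull (fun a ha => hM a ha.1) hs
  have hψt : ψ t ≤ M - ε := ψ.map_le_of_mem_convexHull (fun a ha => ha.2) ht
  have hψx : ψ (lineMap s t μ) ≤ M - μ * ε := by
    rw [lineMap_apply_module, map_add, map_smul, map_smul, smul_eq_mul, smul_eq_mul]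
    nlinarith
  have hμδ : μ < δ := lt_of_mul_lt_mul_left (by linarith) hε.le
  have hst : dist s t ≤ 2 * N := by
    have hNG : ∀ a ∈ G, ‖a‖ ≤ N := fun a ha => hN a ha.1
    have hNB : ∀ a ∈ B, ‖a‖ ≤ N := fun a ha => hN a ha.1
    linarith [dist_le_norm_add_norm s t, norm_le_of_mem_convexHull hNG hs,
      norm_le_of_mem_convexHull hNB ht]
  calc infDist (lineMap s t μ) (convexHull ℝ G)
      ≤ dist (lineMap s t μ) s := infDist_le_dist_of_mem hs
    _ = μ * dist s t := by rw [dist_lineMap_left, Real.norm_of_nonneg hμ0]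
    _ ≤ δ * (2 * N) := mul_le_mul hμδ.le hst dist_nonneg hδ
    _ = 2 * δ * N := by ring

end

/-- every point of the slice
`Slice(conv A, x*, εδ) = {x ∈ conv A : Re x*(x) > sup_{conv A} Re x* − εδ}`
lies within distance `(2δ − δ²)/(1 − δ) · ‖A‖` of the convex hull of the slice
`Slice(A, x*, ε)` (where `δ < 1`). -/
theorem stmt16 {𝕜 X : Type*} [RCLike 𝕜] [NormedAddCommGroup X] [NormedSpace 𝕜 X]
    [NormedSpace ℝ X] [IsScalarTower ℝ 𝕜 X]
    (A : Set X) (hA : Bornology.IsBounded A)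
    (φ : X →L[𝕜] 𝕜) (ε δ : ℝ) (hε : 0 < ε) (hδ : 0 < δ) (hδ1 : δ < 1)
    (x : X) (hx : x ∈ convexHull ℝ A)
    (hxslice :
      sSup ((fun a => RCLike.re (φ a)) '' convexHull ℝ A) - ε * δ < RCLike.re (φ x)) :
    Metric.infDist x
        (convexHull ℝ {a ∈ A | sSup ((fun b => RCLike.re (φ b)) '' A) - ε < RCLike.re (φ a)})
      ≤ (2 * δ - δ ^ 2) / (1 - δ) * sSup ((fun a => ‖a‖) '' A) := by
  let ψ : X →L[ℝ] ℝ := RCLike.reCLM.comp (φ.restrictScalars ℝ)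
  change sSup (ψ '' convexHull ℝ A) - ε * δ < ψ x at hxslice
  change infDist x (convexHull ℝ {a ∈ A | sSup (ψ '' A) - ε < ψ a}) ≤ _
  have hψ_bdd {S : Set X} (hS : Bornology.IsBounded S) : BddAbove (ψ '' S) :=
    (ψ.lipschitz.isBounded_image hS).bddAbove
  have hN : ∀ a ∈ A, ‖a‖ ≤ sSup (norm '' A) := fun a ha =>
    le_csSup (lipschitzWith_one_norm.isBounded_image hA).bddAbove (mem_image_of_mem _ ha)
  have hM : ∀ a ∈ A, ψ a ≤ sSup (ψ '' A) := fun a ha =>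
    le_csSup (hψ_bdd hA) (mem_image_of_mem _ ha)
  have hM_conv : sSup (ψ '' A) ≤ sSup (ψ '' convexHull ℝ A) :=
    csSup_le_csSup (hψ_bdd (isBounded_convexHull.2 hA))
      ((convexHull_nonempty_iff.1 ⟨x, hx⟩).image _) (image_mono (subset_convexHull ℝ A))
  have hδ_le : 2 * δ ≤ (2 * δ - δ ^ 2) / (1 - δ) := by
    rw [le_div_iff₀ (by linarith)]
    nlinarith
  calc _ ≤ 2 * δ * sSup (norm '' A) :=
        infDist_convexHull_superlevelSet_le ψ.toLinearMap hε hδ.le hN hM hx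
          (by rw [ContinuousLinearMap.coe_coe]; linarith)
    _ ≤ _ := mul_le_mul_of_nonneg_right hδ_le (Real.sSup_nonneg (by simp))
end

section
/- Let X be a complex Banach space, F ⊂ B_X convex, m ∈ ℕ with m ≥ 1, and x in the absolutely convex hull of F. Then there exist λ₁, …, λ_m ≥ 0 with Σλ_k = 1 and x₁, …, x_m ∈ F such that ‖x − Σ_{k=1}^m λ_k exp(2πik/m) x_k‖ ≤ 2π/m. -/
open Metric

lemma exp_mul_I_lipschitz (a b : ℝ) :
    ‖Complex.exp (a * Complex.I) - Complex.exp (b * Complex.I)‖ ≤ |a - b| := by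
  have hd : ∀ t : ℝ, HasDerivAt (fun s : ℝ => Complex.exp (s * Complex.I))
      (Complex.exp (t * Complex.I) * Complex.I) t := by
    intro t
    have h1 : HasDerivAt (fun z : ℂ => Complex.exp (z * Complex.I))
        (Complex.exp ((t : ℂ) * Complex.I) * Complex.I) (t : ℂ) := by
      simpa [Function.comp_def] using (Complex.hasDerivAt_exp ((t:ℂ) * Complex.I)).comp (t:ℂ)
        ((hasDerivAt_id (t:ℂ)).mul_const Complex.I)
    exact h1.comp_ofReal
  have := Convex.norm_image_sub_le_of_norm_hasDerivWithin_le
    (f := fun s : ℝ => Complex.exp (s * Complex.I))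
    (f' := fun t : ℝ => Complex.exp (t * Complex.I) * Complex.I) (C := 1)
    (fun t _ => (hd t).hasDerivWithinAt)
    (fun t _ => by simp [Complex.norm_exp_ofReal_mul_I])
    convex_univ (Set.mem_univ b) (Set.mem_univ a)
  simpa [Real.norm_eq_abs] using this

/-- in a complex Banach space, if `F ⊆ B_X` is convex, `m ≥ 1`, and `x`
lies in the absolutely convex hull `aconv F = conv(𝕋·F)`, then there are `λ₁,…,λ_m ≥ 0`
with `Σλₖ = 1` and `x₁,…,x_m ∈ F` such that
`‖x − Σₖ λₖ exp(2πik/m) xₖ‖ ≤ 2π/m`. -/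
theorem stmt18 {X : Type*} [NormedAddCommGroup X] [NormedSpace ℂ X]
    (F : Set X) (hF : F ⊆ closedBall (0 : X) 1) (hconv : Convex ℝ F)
    (m : ℕ) (hm : 1 ≤ m) (x : X)
    (hx : x ∈ convexHull ℝ {y : X | ∃ ω : ℂ, ‖ω‖ = 1 ∧ ∃ v ∈ F, y = ω • v}) :
    ∃ (l : ℕ → ℝ) (v : ℕ → X),
      (∀ k ∈ Finset.Icc 1 m, 0 ≤ l k ∧ v k ∈ F) ∧
      (∑ k ∈ Finset.Icc 1 m, l k) = 1 ∧
      ‖x - ∑ k ∈ Finset.Icc 1 m,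
          ((l k : ℂ) * Complex.exp (2 * (Real.pi : ℂ) * Complex.I * k / m)) • v k‖
        ≤ 2 * Real.pi / m := by
  classical
  rw [convexHull_eq] at hx
  obtain ⟨ι, t, w, z, hw0, hw1, hz, hxc⟩ := hx
  have hx' : x = ∑ i ∈ t, w i • z i := by
    rw [← hxc, Finset.centerMass_eq_of_sum_1 _ _ hw1]
  choose! ω hω v hvF hzv using hz
  have hmpos : (0 : ℝ) < m := by exact_mod_cast hm
  have pi_pos := Real.pi_pos
  -- a base point of F
  obtain ⟨i₀, hi₀⟩ : t.Nonempty := Finset.nonempty_of_sum_ne_zero (by rw [hw1]; norm_num)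
  set y₀ : X := v i₀ with hy₀def
  have hy₀ : y₀ ∈ F := hvF i₀ hi₀
  -- angles
  set α : ι → ℝ := fun i => if 0 ≤ (ω i).arg then (ω i).arg else (ω i).arg + 2 * Real.pi with hα
  have hα0 : ∀ i, 0 ≤ α i := by
    intro i; dsimp [α]; split
    · assumption
    · nlinarith [Complex.neg_pi_lt_arg (ω i)]
  have hα2 : ∀ i, α i ≤ 2 * Real.pi := by
    intro i; dsimp [α]; split
    · nlinarith [Complex.arg_le_pi (ω i)]
    · nlinarith [Complex.arg_le_pi (ω i)]
  have hωα : ∀ i ∈ t, ω i = Complex.exp (α i * Complex.I) := by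
    intro i hi
    have h1 : ‖ω i‖ = 1 := by
      exact hω i hi
    have h2 := Complex.norm_mul_exp_arg_mul_I (ω i)
    rw [h1] at h2; push_cast at h2
    rw [one_mul] at h2
    dsimp [α]; split
    · exact h2.symm
    · push_cast
      rw [add_mul, Complex.exp_add, Complex.exp_two_pi_mul_I, mul_one]
      exact h2.symm
  -- arc index
  set K : ι → ℕ := fun i => max 1 ⌈α i * m / (2 * Real.pi)⌉₊ with hK
  have hKmem : ∀ i, K i ∈ Finset.Icc 1 m := by
    intro i
    rw [Finset.mem_Icc]
    refine ⟨le_max_left _ _, max_le hm (Nat.ceil_le.2 ?_)⟩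
    rw [div_le_iff₀ (by positivity)]
    nlinarith [hα2 i, hmpos]
  have hang : ∀ i, |α i - 2 * Real.pi * (K i) / m| ≤ 2 * Real.pi / m := by
    intro i
    have hup : α i ≤ 2 * Real.pi * (K i) / m := by
      have h1 : α i * m / (2 * Real.pi) ≤ (K i : ℝ) :=
        le_trans (Nat.le_ceil _) (by exact_mod_cast le_max_right 1 _)
      rw [div_le_iff₀ (by positivity)] at h1
      rw [le_div_iff₀ hmpos]
      nlinarith
    have hlo : 2 * Real.pi * (K i) / m - 2 * Real.pi / m ≤ α i := by
      rcases Nat.eq_zero_or_pos ⌈α i * m / (2 * Real.pi)⌉₊ with h0 | h1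
      · have hK1 : K i = 1 := by rw [hK]; simp [h0]
        rw [hK1]
        have heq : 2 * Real.pi * ((1:ℕ):ℝ) / m - 2 * Real.pi / m = 0 := by
          push_cast; ring
        linarith [hα0 i]
      · have hKc : K i = ⌈α i * m / (2 * Real.pi)⌉₊ := by
          rw [hK]; simp [Nat.one_le_iff_ne_zero.2 (Nat.pos_iff_ne_zero.1 h1)]
        have h2 : (⌈α i * m / (2 * Real.pi)⌉₊ : ℝ) < α i * m / (2 * Real.pi) + 1 :=
          Nat.ceil_lt_add_one
            (div_nonneg (mul_nonneg (hα0 i) hmpos.le) (by positivity))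
        have h4 : ((⌈α i * m / (2 * Real.pi)⌉₊ : ℝ) - 1) * (2 * Real.pi) < α i * m := by
          rw [← lt_div_iff₀ (by positivity : (0:ℝ) < 2 * Real.pi)]
          linarith
        rw [hKc, div_sub_div_same, div_le_iff₀ hmpos]
        nlinarith
    rw [abs_le]
    constructor <;> linarith
  -- exp bound
  have hexp : ∀ i ∈ t,
      ‖ω i - Complex.exp (2 * (Real.pi : ℂ) * Complex.I * (K i) / m)‖ ≤ 2 * Real.pi / m := by
    intro i hi
    have hcast : (2 * (Real.pi : ℂ) * Complex.I * (K i) / m)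
        = ((2 * Real.pi * (K i) / m : ℝ) : ℂ) * Complex.I := by
      push_cast; ring
    rw [hωα i hi, hcast]
    exact le_trans (exp_mul_I_lipschitz _ _) (hang i)
  -- definitions
  set e : ℕ → ℂ := fun k => Complex.exp (2 * (Real.pi : ℂ) * Complex.I * k / m) with he
  set l : ℕ → ℝ := fun k => ∑ i ∈ t.filter (fun i => K i = k), w i with hl
  set V : ℕ → X := fun k =>
    if l k = 0 then y₀ else (t.filter (fun i => K i = k)).centerMass w v with hV
  have hl0 : ∀ k, 0 ≤ l k := fun k =>
    Finset.sum_nonneg fun i hi => hw0 i (Finset.mem_of_mem_filter i hi)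
  refine ⟨l, V, ?_, ?_, ?_⟩
  · intro k _
    refine ⟨hl0 k, ?_⟩
    rw [hV]
    dsimp only
    split
    · exact hy₀
    · exact hconv.centerMass_mem
        (fun i hi => hw0 i (Finset.mem_of_mem_filter i hi))
        (lt_of_le_of_ne (hl0 k) (Ne.symm (by assumption)))
        (fun i hi => hvF i (Finset.mem_of_mem_filter i hi))
  · rw [hl]
    rw [Finset.sum_fiberwise_of_maps_to (fun i _ => hKmem i) w]
    exact hw1
  · -- main estimate
    have hsum : ∑ k ∈ Finset.Icc 1 m, ((l k : ℂ) * e k) • V k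
        = ∑ i ∈ t, ((w i : ℂ) * e (K i)) • v i := by
      rw [← Finset.sum_fiberwise_of_maps_to (fun i (_ : i ∈ t) => hKmem i)
        (fun i => ((w i : ℂ) * e (K i)) • v i)]
      refine Finset.sum_congr rfl fun k _ => ?_
      have hrw : ∑ i ∈ t.filter (fun i => K i = k), ((w i : ℂ) * e (K i)) • v i
          = ∑ i ∈ t.filter (fun i => K i = k), ((w i : ℂ) * e k) • v i := by
        refine Finset.sum_congr rfl fun i hi => ?_
        rw [(Finset.mem_filter.1 hi).2]
      rw [hrw]
      rcases eq_or_ne (l k) 0 with h0 | h0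
      · have hz0 : ∀ i ∈ t.filter (fun i => K i = k), w i = 0 := by
          rw [hl] at h0
          exact (Finset.sum_eq_zero_iff_of_nonneg
            (fun i hi => hw0 i (Finset.mem_of_mem_filter i hi))).1 h0
        rw [h0]
        rw [Finset.sum_eq_zero fun i hi => by rw [hz0 i hi]; simp]
        simp
      · have hVk : V k = (t.filter (fun i => K i = k)).centerMass w v := by
          rw [hV]; simp [h0]
        rw [hVk, Finset.centerMass]
        have hsw : ∑ i ∈ t.filter (fun i => K i = k), w i = l k := rfl
        rw [hsw]
        have hlC : ((l k : ℂ)) ≠ 0 := by exact_mod_cast h0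
        rw [← algebraMap_smul ℂ ((l k)⁻¹ : ℝ)
          (∑ i ∈ t.filter (fun i => K i = k), w i • v i)]
        rw [smul_smul]
        have : (l k : ℂ) * e k * algebraMap ℝ ℂ (l k)⁻¹ = e k := by
          rw [map_inv₀, Complex.coe_algebraMap]
          field_simp
        rw [this, Finset.smul_sum]
        refine Finset.sum_congr rfl fun i hi => ?_
        rw [← algebraMap_smul ℂ (w i) (v i), smul_smul, Complex.coe_algebraMap]
        ring_nf
    rw [hsum, hx']
    have hterm : ∀ i ∈ t, w i • z i - ((w i : ℂ) * e (K i)) • v i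
        = ((w i : ℂ) * (ω i - e (K i))) • v i := by
      intro i hi
      rw [hzv i hi, ← algebraMap_smul ℂ (w i) ((ω i) • v i), smul_smul,
        Complex.coe_algebraMap, mul_sub, sub_smul]
    calc ‖∑ i ∈ t, w i • z i - ∑ i ∈ t, ((w i : ℂ) * e (K i)) • v i‖
        = ‖∑ i ∈ t, ((w i : ℂ) * (ω i - e (K i))) • v i‖ := by
          rw [← Finset.sum_sub_distrib]
          congr 1
          exact Finset.sum_congr rfl hterm
      _ ≤ ∑ i ∈ t, ‖((w i : ℂ) * (ω i - e (K i))) • v i‖ := norm_sum_le _ _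
      _ ≤ ∑ i ∈ t, w i * (2 * Real.pi / m) := by
          refine Finset.sum_le_sum fun i hi => ?_
          rw [norm_smul, norm_mul]
          have hv1 : ‖v i‖ ≤ 1 := by
            have := hF (hvF i hi)
            rwa [mem_closedBall, dist_zero_right] at this
          have hwn : ‖(w i : ℂ)‖ = w i := by
            rw [Complex.norm_real, Real.norm_eq_abs, abs_of_nonneg (hw0 i hi)]
          calc ‖(w i : ℂ)‖ * ‖ω i - e (K i)‖ * ‖v i‖
              ≤ ‖(w i : ℂ)‖ * ‖ω i - e (K i)‖ * 1 := by
                apply mul_le_mul_of_nonneg_left hv1 (by positivity)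
            _ = w i * ‖ω i - e (K i)‖ := by rw [hwn]; ring
            _ ≤ w i * (2 * Real.pi / m) :=
                mul_le_mul_of_nonneg_left (hexp i hi) (hw0 i hi)
      _ = 2 * Real.pi / m := by rw [← Finset.sum_mul, hw1, one_mul]
end
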